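/- arXiv:0808.1361 — 9 statements merged into one kernel-verified Lean document; each statement's English description precedes it below -/
import Mathlib

section
/- Let X be a separable metric space equipped with its Borel σ-algebra, let T be a nonempty set, and let (κ_t)_{t∈T} be a family of Markov kernels from X to X, each of which is Feller. Assume the family is weakly topologically irreducible: for all u₁, u₂ ∈ X there exists v ∈ X such that for every open set A containing v there exist t₁, t₂ ∈ T with κ_{t₁}(u₁, A) > 0 and κ_{t₂}(u₂, A) > 0. Let μ₁ and μ₂ be Borel probability measures on X, each invariant for every kernel of the family, i.e. ∫ κ_t(x, A) μ_i(dx) = μ_i(A) for every t ∈ T, every Borel set A, and i = 1,2. Then there exists a point v ∈ X such that μ₁(B(v,ε)) > 0 and μ₂(B(v,ε)) > 0 for every ε > 0, where B(v,ε) is the open ball of radius ε around v; in particular v belongs to the topological support of both μ₁ and μ₂. -/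
open MeasureTheory ProbabilityTheory BoundedContinuousFunction
open scoped ENNReal

private lemma aux_pos {X : Type*} [MetricSpace X]
    [MeasurableSpace X] [BorelSpace X]
    (κ : Kernel X X) (hM : IsMarkovKernel κ)
    (hF : ∀ φ : X →ᵇ ℝ, Continuous fun x => ∫ y, φ y ∂(κ x))
    (μ : Measure X) [IsProbabilityMeasure μ]
    (hinv : ∀ A : Set X, MeasurableSet A → ∫⁻ x, κ x A ∂μ = μ A)
    (u : X) (hu : ∀ s ∈ nhds u, 0 < μ s)
    (A : Set X) (hA : IsOpen A) (hpos : 0 < κ u A) : 0 < μ A := by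
  set P : X → ProbabilityMeasure X := fun x => ⟨κ x, hM.isProbabilityMeasure x⟩ with hP
  have h_tend : Filter.Tendsto P (nhds u) (nhds (P u)) := by
    rw [ProbabilityMeasure.tendsto_iff_forall_integral_tendsto]
    intro f
    exact (hF f).tendsto u
  have h_liminf : (P u : Measure X) A ≤ Filter.liminf (fun x => (P x : Measure X) A) (nhds u) :=
    ProbabilityMeasure.le_liminf_measure_open_of_tendsto h_tend hA
  have hne : κ u A ≠ ∞ := (measure_lt_top _ _).ne
  have hhalf : κ u A / 2 < Filter.liminf (fun x => (κ x) A) (nhds u) :=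
    lt_of_lt_of_le (ENNReal.half_lt_self hpos.ne' hne) h_liminf
  have hev : ∀ᶠ x in nhds u, κ u A / 2 < κ x A :=
    Filter.eventually_lt_of_lt_liminf hhalf
  obtain ⟨s, hsub, hsopen, hus⟩ := mem_nhds_iff.mp hev
  have hμs : 0 < μ s := hu s (hsopen.mem_nhds hus)
  have hmeas : Measurable fun x => κ x A := κ.measurable_coe hA.measurableSet
  have : κ u A / 2 * μ s ≤ μ A := by
    rw [← hinv A hA.measurableSet]
    calc κ u A / 2 * μ s = ∫⁻ _ in s, κ u A / 2 ∂μ := by rw [setLIntegral_const]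
      _ ≤ ∫⁻ x in s, κ x A ∂μ :=
        setLIntegral_mono hmeas (fun x hx => (hsub hx).le)
      _ ≤ ∫⁻ x, κ x A ∂μ := setLIntegral_le_lintegral _ _
  refine lt_of_lt_of_le ?_ this
  exact ENNReal.mul_pos (by simp [ENNReal.div_eq_zero_iff, hpos.ne']) hμs.ne'

/-- If a nonempty family of Feller Markov kernels on a separable metric space is weakly
topologically irreducible, then any two probability measures invariant for every kernel of the
family have a common point in their topological supports: there is `v` such that every ball
around `v` has positive measure for both. -/
theorem stmt0 {X : Type*} [MetricSpace X] [TopologicalSpace.SeparableSpace X]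
    [MeasurableSpace X] [BorelSpace X]
    {T : Type*} [Nonempty T]
    (κ : T → Kernel X X) (hMarkov : ∀ t, IsMarkovKernel (κ t))
    (hFeller : ∀ t : T, ∀ φ : X →ᵇ ℝ, Continuous fun x => ∫ y, φ y ∂(κ t x))
    (hirr : ∀ u₁ u₂ : X, ∃ v : X, ∀ A : Set X, IsOpen A → v ∈ A →
      ∃ t₁ t₂ : T, 0 < κ t₁ u₁ A ∧ 0 < κ t₂ u₂ A)
    (μ₁ μ₂ : Measure X) [IsProbabilityMeasure μ₁] [IsProbabilityMeasure μ₂]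
    (hinv₁ : ∀ t : T, ∀ A : Set X, MeasurableSet A → ∫⁻ x, κ t x A ∂μ₁ = μ₁ A)
    (hinv₂ : ∀ t : T, ∀ A : Set X, MeasurableSet A → ∫⁻ x, κ t x A ∂μ₂ = μ₂ A) :
    ∃ v : X, ∀ ε : ℝ, 0 < ε →
      0 < μ₁ (Metric.ball v ε) ∧ 0 < μ₂ (Metric.ball v ε) := by
  haveI : SecondCountableTopology X := UniformSpace.secondCountable_of_separable X
  have hsupp : ∀ (μ : Measure X), IsProbabilityMeasure μ → ∃ u : X, ∀ s ∈ nhds u, 0 < μ s := by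
    intro μ hμ
    have : μ Set.univ ≠ 0 := by simp
    obtain ⟨u, -, hu⟩ := exists_mem_forall_mem_nhdsWithin_pos_measure this
    exact ⟨u, fun s hs => hu s (by rwa [nhdsWithin_univ])⟩
  obtain ⟨u₁, hu₁⟩ := hsupp μ₁ inferInstance
  obtain ⟨u₂, hu₂⟩ := hsupp μ₂ inferInstance
  obtain ⟨v, hv⟩ := hirr u₁ u₂
  refine ⟨v, fun ε hε => ?_⟩
  obtain ⟨t₁, t₂, h₁, h₂⟩ := hv (Metric.ball v ε) Metric.isOpen_ball (Metric.mem_ball_self hε)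
  exact ⟨aux_pos (κ t₁) (hMarkov t₁) (hFeller t₁) μ₁ (hinv₁ t₁) u₁ hu₁ _ Metric.isOpen_ball h₁,
    aux_pos (κ t₂) (hMarkov t₂) (hFeller t₂) μ₂ (hinv₂ t₂) u₂ hu₂ _ Metric.isOpen_ball h₂⟩
end

section
/- Let H be a real Hilbert space, let Π : H → H be an orthogonal projection (a bounded self-adjoint idempotent), and let M : H → H be a bounded self-adjoint operator which is positive (⟨Mξ, ξ⟩ ≥ 0 for all ξ). Let δ ∈ (0,1] and γ > 0 be such that ⟨Mξ, ξ⟩ ≥ γ‖ξ‖² for every ξ ∈ H with ‖Πξ‖ ≥ δ‖ξ‖. Then for every β > 0, the operator R = β(β·Id + M)^{-1} (well defined since β·Id + M is boundedly invertible) satisfies the operator-norm bound ‖Π ∘ R‖ ≤ max{δ, √(β/γ)}. -/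
open scoped RealInnerProductSpace

/-- Lemma 5.4: if `M` is a bounded self-adjoint positive operator on a real Hilbert space
satisfying `⟨Mξ, ξ⟩ ≥ γ‖ξ‖²` on the cone `{ξ : ‖Πξ‖ ≥ δ‖ξ‖}` for an orthogonal projection `Π`,
then for every `β > 0` the operator `R = β (β + M)⁻¹` satisfies `‖Π R‖ ≤ max δ √(β/γ)`. -/
theorem stmt2 {H : Type*} [NormedAddCommGroup H] [InnerProductSpace ℝ H] [CompleteSpace H]
    (P M : H →L[ℝ] H)
    (hP_idem : P ∘L P = P)
    (hP_sa : ∀ x y : H, ⟪P x, y⟫ = ⟪x, P y⟫)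
    (hM_sa : ∀ x y : H, ⟪M x, y⟫ = ⟪x, M y⟫)
    (hM_pos : ∀ ξ : H, 0 ≤ ⟪M ξ, ξ⟫)
    {δ γ β : ℝ} (hδ : δ ∈ Set.Ioc (0:ℝ) 1) (hγ : 0 < γ) (hβ : 0 < β)
    (hcone : ∀ ξ : H, δ * ‖ξ‖ ≤ ‖P ξ‖ → γ * ‖ξ‖ ^ 2 ≤ ⟪M ξ, ξ⟫)
    (Tinv : H →L[ℝ] H)
    (hTinv₁ : (β • (1 : H →L[ℝ] H) + M) ∘L Tinv = 1)
    (hTinv₂ : Tinv ∘L (β • (1 : H →L[ℝ] H) + M) = 1) :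
    ‖P ∘L (β • Tinv)‖ ≤ max δ (Real.sqrt (β / γ)) := by
  obtain ⟨hδ0, hδ1⟩ := hδ
  have hmax0 : 0 ≤ max δ (Real.sqrt (β / γ)) := le_max_of_le_left hδ0.le
  apply ContinuousLinearMap.opNorm_le_bound _ hmax0
  intro x
  set u := Tinv x with hu
  have hxu : β • u + M u = x := by
    have := DFunLike.congr_fun hTinv₁ x
    simpa [ContinuousLinearMap.comp_apply, ContinuousLinearMap.add_apply,
      ContinuousLinearMap.smul_apply] using this
  have hinner : ⟪x, u⟫ = β * ‖u‖ ^ 2 + ⟪M u, u⟫ := by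
    rw [← hxu, inner_add_left, real_inner_smul_left, real_inner_self_eq_norm_sq]
  have happ : (P ∘L (β • Tinv)) x = β • P u := by
    simp [ContinuousLinearMap.comp_apply, ContinuousLinearMap.smul_apply, hu]
  have hnapp : ‖(P ∘L (β • Tinv)) x‖ = β * ‖P u‖ := by
    rw [happ, norm_smul, Real.norm_eq_abs, abs_of_pos hβ]
  rw [hnapp]
  have hPle : ‖P u‖ ≤ ‖u‖ := by
    have h1 : ‖P u‖ ^ 2 = ⟪P u, u⟫ := by
      have : ⟪P u, P u⟫ = ⟪u, P u⟫ := by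
        rw [hP_sa]
        have : P (P u) = P u := by
          have := DFunLike.congr_fun hP_idem u
          simpa using this
        rw [this]
      rw [← real_inner_self_eq_norm_sq, this, real_inner_comm]
    have h2 : ⟪P u, u⟫ ≤ ‖P u‖ * ‖u‖ := real_inner_le_norm _ _
    nlinarith [norm_nonneg (P u), norm_nonneg u]
  have hix : ⟪x, u⟫ ≤ ‖x‖ * ‖u‖ := real_inner_le_norm _ _
  have hbu : β * ‖u‖ ≤ ‖x‖ := by
    rcases eq_or_lt_of_le (norm_nonneg u) with h0 | h0
    · rw [← h0]; simpa using norm_nonneg x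
    · nlinarith [hM_pos u]
  by_cases hc : δ * ‖u‖ ≤ ‖P u‖
  · -- cone case: use √(β/γ)
    have hMu := hcone u hc
    have hgu : γ * ‖u‖ ≤ ‖x‖ := by
      rcases eq_or_lt_of_le (norm_nonneg u) with h0 | h0
      · rw [← h0]; simpa using norm_nonneg x
      · nlinarith
    have key : (β * ‖P u‖) ^ 2 ≤ (β / γ) * ‖x‖ ^ 2 := by
      rw [div_mul_eq_mul_div, le_div_iff₀ hγ]
      have h3 : β * ‖P u‖ ≤ ‖x‖ := (mul_le_mul_of_nonneg_left hPle hβ.le).trans hbu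
      have h4 : γ * ‖P u‖ ≤ ‖x‖ := (mul_le_mul_of_nonneg_left hPle hγ.le).trans hgu
      nlinarith [mul_le_mul h3 h4 (by positivity) (norm_nonneg x), hβ.le]
    have h1 : β * ‖P u‖ = Real.sqrt ((β * ‖P u‖) ^ 2) := by
      rw [Real.sqrt_sq (by positivity)]
    have h2 : Real.sqrt ((β / γ) * ‖x‖ ^ 2) = Real.sqrt (β / γ) * ‖x‖ := by
      rw [Real.sqrt_mul (by positivity), Real.sqrt_sq (norm_nonneg x)]
    calc β * ‖P u‖ = Real.sqrt ((β * ‖P u‖) ^ 2) := h1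
      _ ≤ Real.sqrt ((β / γ) * ‖x‖ ^ 2) := Real.sqrt_le_sqrt key
      _ = Real.sqrt (β / γ) * ‖x‖ := h2
      _ ≤ max δ (Real.sqrt (β / γ)) * ‖x‖ :=
          mul_le_mul_of_nonneg_right (le_max_right _ _) (norm_nonneg x)
  · push_neg at hc
    calc β * ‖P u‖ ≤ β * (δ * ‖u‖) := by nlinarith
      _ = δ * (β * ‖u‖) := by ring
      _ ≤ δ * ‖x‖ := mul_le_mul_of_nonneg_left hbu hδ0.le
      _ ≤ max δ (Real.sqrt (β / γ)) * ‖x‖ :=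
          mul_le_mul_of_nonneg_right (le_max_left _ _) (norm_nonneg x)
end

section
/- Let (Ω, ℱ, ℙ) be a probability space, H a real Hilbert space, Π : H → H an orthogonal projection, and fix constants δ ∈ (0,1), p ≥ 1 and C > 0. Suppose that for each ω ∈ Ω, M(ω) is a bounded self-adjoint positive operator on H, and that γ(ω) > 0 and β(ω) > 0 are random variables such that: (a) almost surely, ⟨M(ω)ξ, ξ⟩ ≥ γ(ω)‖ξ‖² for every ξ ∈ H with ‖Πξ‖ ≥ δ‖ξ‖; and (b) ℙ(β ≥ δ²γ) ≤ C δ^p. Define R(ω) = β(ω)(β(ω)·Id + M(ω))^{-1} and assume that ω ↦ ‖Π ∘ R(ω)‖ is measurable. Then E ‖Π ∘ R‖^p ≤ (1 + C) δ^p. -/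
/-!
On the event `β < δ²γ` the cone condition gives `‖Π ∘ R‖ ≤ δ`: writing `x = (β + M) y`, either
`y` lies outside the cone, so `‖Π y‖ < δ‖y‖` and `β‖y‖ ≤ ‖x‖`, or it lies inside, so
`γ‖y‖² ≤ ⟪x, y⟫` and `β‖y‖ ≤ δγ‖y‖ ≤ δ‖x‖`. On the complementary event, of probability at most
`C δ^p`, one only has `‖Π ∘ R‖ ≤ 1`. Splitting the expectation over the two events gives
`δ^p + C δ^p`.
-/

open MeasureTheory
open scoped RealInnerProductSpace ENNReal

section Resolvent

variable {H : Type*} [NormedAddCommGroup H] [InnerProductSpace ℝ H]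

theorem mul_norm_le_of_mul_sq_le_inner {x y : H} {c : ℝ} (h : c * ‖y‖ ^ 2 ≤ ⟪x, y⟫) :
    c * ‖y‖ ≤ ‖x‖ := by
  rcases (norm_nonneg y).eq_or_lt with hy | hy
  · simp [← hy]
  · refine le_of_mul_le_mul_right ?_ hy
    nlinarith [real_inner_le_norm x y]

variable {M T : H →L[ℝ] H} {β : ℝ}

theorem inner_eq_of_comp_eq_one (hT : (β • (1 : H →L[ℝ] H) + M) ∘L T = 1) (x : H) :
    ⟪x, T x⟫ = β * ‖T x‖ ^ 2 + ⟪M (T x), T x⟫ := by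
  have hx : β • T x + M (T x) = x := by simpa using congrArg (· x) hT
  rw [← real_inner_self_eq_norm_sq, ← real_inner_smul_left, ← inner_add_left, hx]

theorem mul_norm_apply_le_of_comp_eq_one (hM : ∀ ξ, 0 ≤ ⟪M ξ, ξ⟫)
    (hT : (β • (1 : H →L[ℝ] H) + M) ∘L T = 1) (x : H) : β * ‖T x‖ ≤ ‖x‖ :=
  mul_norm_le_of_mul_sq_le_inner <| by
    rw [inner_eq_of_comp_eq_one hT]
    linarith [hM (T x)]

theorem norm_comp_smul_apply (hβ : 0 ≤ β) (P : H →L[ℝ] H) (x : H) :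
    ‖(P ∘L (β • T)) x‖ = β * ‖P (T x)‖ := by
  simp [norm_smul, abs_of_nonneg hβ]

theorem opNorm_smul_le_one_of_comp_eq_one (hβ : 0 ≤ β) (hM : ∀ ξ, 0 ≤ ⟪M ξ, ξ⟫)
    (hT : (β • (1 : H →L[ℝ] H) + M) ∘L T = 1) : ‖β • T‖ ≤ 1 :=
  ContinuousLinearMap.opNorm_le_bound _ zero_le_one fun x => by
    simpa [norm_smul, abs_of_nonneg hβ] using mul_norm_apply_le_of_comp_eq_one hM hT x

theorem opNorm_comp_smul_le_of_cone {P : H →L[ℝ] H} {δ γ : ℝ} (hP : ‖P‖ ≤ 1) (hδ : 0 ≤ δ)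
    (hβ : 0 ≤ β) (hM : ∀ ξ, 0 ≤ ⟪M ξ, ξ⟫) (hT : (β • (1 : H →L[ℝ] H) + M) ∘L T = 1)
    (hcone : ∀ ξ : H, δ * ‖ξ‖ ≤ ‖P ξ‖ → γ * ‖ξ‖ ^ 2 ≤ ⟪M ξ, ξ⟫) (hβγ : β ≤ δ * γ) :
    ‖P ∘L (β • T)‖ ≤ δ := by
  refine ContinuousLinearMap.opNorm_le_bound _ hδ fun x => ?_
  rw [norm_comp_smul_apply hβ]
  by_cases hin : δ * ‖T x‖ ≤ ‖P (T x)‖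
  · have hγx : γ * ‖T x‖ ≤ ‖x‖ := mul_norm_le_of_mul_sq_le_inner <| by
      rw [inner_eq_of_comp_eq_one hT]
      nlinarith [hcone _ hin, sq_nonneg ‖T x‖]
    have hPx : ‖P (T x)‖ ≤ ‖T x‖ := by simpa using P.le_of_opNorm_le hP (T x)
    calc β * ‖P (T x)‖ ≤ β * ‖T x‖ := by gcongr
      _ ≤ δ * γ * ‖T x‖ := by gcongr
      _ = δ * (γ * ‖T x‖) := by ring
      _ ≤ δ * ‖x‖ := by gcongr
  · calc β * ‖P (T x)‖ ≤ β * (δ * ‖T x‖) := by gcongr; exact (not_le.1 hin).le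
      _ = δ * (β * ‖T x‖) := by ring
      _ ≤ δ * ‖x‖ := by gcongr; exact mul_norm_apply_le_of_comp_eq_one hM hT x

end Resolvent

theorem lintegral_le_add_measure_of_le_one_of_ae_notMem_le {Ω : Type*} [MeasurableSpace Ω]
    {μ : Measure Ω} [IsProbabilityMeasure μ] {g : Ω → ℝ≥0∞} {ε : ℝ≥0∞} {B : Set Ω}
    (hg : ∀ ω, g ω ≤ 1) (hgB : ∀ᵐ ω ∂μ, ω ∉ B → g ω ≤ ε) : ∫⁻ ω, g ω ∂μ ≤ ε + μ B := by
  have hsplit : ∀ᵐ ω ∂μ, g ω ≤ ε + B.indicator (fun _ => 1) ω := by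
    filter_upwards [hgB] with ω hω
    by_cases hB : ω ∈ B
    · simpa [hB] using (hg ω).trans le_add_self
    · simpa [hB] using hω hB
  calc ∫⁻ ω, g ω ∂μ ≤ ∫⁻ ω, ε + B.indicator (fun _ => 1) ω ∂μ := lintegral_mono_ae hsplit
    _ = ε + ∫⁻ ω, B.indicator (fun _ => 1) ω ∂μ := by
      rw [lintegral_add_left measurable_const, lintegral_const, measure_univ, mul_one]
    _ ≤ ε + μ B := by grw [lintegral_indicator_const_le, one_mul]

theorem stmt3_general {Ω : Type*} [MeasurableSpace Ω] (ℙ : Measure Ω) [IsProbabilityMeasure ℙ]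
    {H : Type*} [NormedAddCommGroup H] [InnerProductSpace ℝ H] [CompleteSpace H]
    (P : H →L[ℝ] H)
    (hP_idem : P ∘L P = P)
    (hP_sa : ∀ x y : H, ⟪P x, y⟫ = ⟪x, P y⟫)
    {δ p C : ℝ} (hδ : δ ∈ Set.Ioo (0:ℝ) 1) (hp : 1 ≤ p) (hC : 0 < C)
    (M : Ω → H →L[ℝ] H) (γ β : Ω → ℝ)
    (hM_pos : ∀ ω : Ω, ∀ ξ : H, 0 ≤ ⟪M ω ξ, ξ⟫)
    (hγ : ∀ ω, 0 < γ ω) (hβ : ∀ ω, 0 < β ω)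
    (hcone : ∀ᵐ ω ∂ℙ, ∀ ξ : H, δ * ‖ξ‖ ≤ ‖P ξ‖ → γ ω * ‖ξ‖ ^ 2 ≤ ⟪M ω ξ, ξ⟫)
    (hprob : ℙ {ω | δ ^ 2 * γ ω ≤ β ω} ≤ ENNReal.ofReal (C * δ ^ p))
    (Tinv : Ω → H →L[ℝ] H)
    (hTinv₁ : ∀ ω, (β ω • (1 : H →L[ℝ] H) + M ω) ∘L Tinv ω = 1) :
    ∫⁻ ω, ENNReal.ofReal (‖P ∘L (β ω • Tinv ω)‖ ^ p) ∂ℙ ≤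
      ENNReal.ofReal ((1 + C) * δ ^ p) := by
  obtain ⟨hδ0, hδ1⟩ := hδ
  have hP : ‖P‖ ≤ 1 :=
    IsStarProjection.norm_le P ⟨hP_idem, ContinuousLinearMap.isSelfAdjoint_iff_isSymmetric.2 hP_sa⟩
  have hle_one : ∀ ω, ‖P ∘L (β ω • Tinv ω)‖ ≤ 1 := fun ω =>
    (P.opNorm_comp_le _).trans <| mul_le_one₀ hP (norm_nonneg _)
      (opNorm_smul_le_one_of_comp_eq_one (hβ ω).le (hM_pos ω) (hTinv₁ ω))
  have hgood : ∀ᵐ ω ∂ℙ, ω ∉ {ω | δ ^ 2 * γ ω ≤ β ω} →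
      ENNReal.ofReal (‖P ∘L (β ω • Tinv ω)‖ ^ p) ≤ ENNReal.ofReal (δ ^ p) := by
    filter_upwards [hcone] with ω hconeω hβγ
    have hβγ' : β ω ≤ δ * γ ω := by
      simp only [not_le] at hβγ
      nlinarith [mul_pos (mul_pos hδ0 (sub_pos.2 hδ1)) (hγ ω)]
    gcongr
    exact opNorm_comp_smul_le_of_cone hP hδ0.le (hβ ω).le (hM_pos ω) (hTinv₁ ω) hconeω hβγ'
  calc ∫⁻ ω, ENNReal.ofReal (‖P ∘L (β ω • Tinv ω)‖ ^ p) ∂ℙ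
      ≤ ENNReal.ofReal (δ ^ p) + ℙ {ω | δ ^ 2 * γ ω ≤ β ω} :=
        lintegral_le_add_measure_of_le_one_of_ae_notMem_le (fun ω => ENNReal.ofReal_le_one.2 <|
          Real.rpow_le_one (norm_nonneg _) (hle_one ω) (by linarith)) hgood
    _ ≤ ENNReal.ofReal (δ ^ p) + ENNReal.ofReal (C * δ ^ p) := by gcongr
    _ = ENNReal.ofReal ((1 + C) * δ ^ p) := by
      rw [← ENNReal.ofReal_add (by positivity) (by positivity)]
      ring_nf

/-- Corollary 5.5 (first part): if for a.e. `ω` the random bounded self-adjoint positive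
operator `M(ω)` satisfies the cone bound `⟨M(ω)ξ, ξ⟩ ≥ γ(ω)‖ξ‖²` on `{ξ : ‖Πξ‖ ≥ δ‖ξ‖}` and
`ℙ(β ≥ δ²γ) ≤ C δ^p`, then the regularized inverse `R(ω) = β(ω)(β(ω) + M(ω))⁻¹` satisfies
`E ‖Π ∘ R‖^p ≤ (1 + C) δ^p`. -/
theorem stmt3 {Ω : Type*} [MeasurableSpace Ω] (ℙ : Measure Ω) [IsProbabilityMeasure ℙ]
    {H : Type*} [NormedAddCommGroup H] [InnerProductSpace ℝ H] [CompleteSpace H]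
    (P : H →L[ℝ] H)
    (hP_idem : P ∘L P = P)
    (hP_sa : ∀ x y : H, ⟪P x, y⟫ = ⟪x, P y⟫)
    {δ p C : ℝ} (hδ : δ ∈ Set.Ioo (0:ℝ) 1) (hp : 1 ≤ p) (hC : 0 < C)
    (M : Ω → H →L[ℝ] H) (γ β : Ω → ℝ)
    (hM_sa : ∀ ω : Ω, ∀ x y : H, ⟪M ω x, y⟫ = ⟪x, M ω y⟫)
    (hM_pos : ∀ ω : Ω, ∀ ξ : H, 0 ≤ ⟪M ω ξ, ξ⟫)
    (hγ : ∀ ω, 0 < γ ω) (hβ : ∀ ω, 0 < β ω)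
    (hcone : ∀ᵐ ω ∂ℙ, ∀ ξ : H, δ * ‖ξ‖ ≤ ‖P ξ‖ → γ ω * ‖ξ‖ ^ 2 ≤ ⟪M ω ξ, ξ⟫)
    (hprob : ℙ {ω | δ ^ 2 * γ ω ≤ β ω} ≤ ENNReal.ofReal (C * δ ^ p))
    (Tinv : Ω → H →L[ℝ] H)
    (hTinv₁ : ∀ ω, (β ω • (1 : H →L[ℝ] H) + M ω) ∘L Tinv ω = 1)
    (hTinv₂ : ∀ ω, Tinv ω ∘L (β ω • (1 : H →L[ℝ] H) + M ω) = 1)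
    (hmeas : Measurable fun ω => ‖P ∘L (β ω • Tinv ω)‖) :
    ∫⁻ ω, ENNReal.ofReal (‖P ∘L (β ω • Tinv ω)‖ ^ p) ∂ℙ ≤
      ENNReal.ofReal ((1 + C) * δ ^ p) :=
  stmt3_general ℙ P hP_idem hP_sa hδ hp hC M γ β hM_pos hγ hβ hcone hprob Tinv hTinv₁
end

section
/- Let H be a Hilbert space and let (g_i)_{i≥1} be a sequence of elements of H whose linear span is dense in H. For n ≥ 1 define the symmetric bilinear form Q_n on H by ⟨h, Q_n h⟩ = Σ_{i=1}^n ⟨g_i, h⟩². Then for every orthogonal projection Π : H → H with finite-dimensional range and every α > 0, there exist an integer N ≥ 1 and a constant c > 0 such that Σ_{i=1}^n ⟨g_i, h⟩² ≥ c ‖Πh‖² for every n ≥ N and every h ∈ H satisfying ‖Πh‖ ≥ α‖h‖. -/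
/-!
The unit sphere of the finite-dimensional range of `P` is compact, so by density of the span it
is covered by finitely many `α / 2`-balls centred at finite linear combinations `v = Σ aᵢ gᵢ`;
together these involve only `g₀, …, g_{N-1}`. By Cauchy–Schwarz, `⟪v, h⟫² ≤ (Σ aᵢ²) Σ_{i<n} ⟪gᵢ, h⟫²`.
If `‖P h‖ ≥ α ‖h‖` and `w = P h / ‖P h‖` lies in the ball around `v`, then
`⟪v, h⟫ ≥ ⟪w, h⟫ - (α / 2) ‖h‖ ≥ ‖P h‖ / 2`, because `⟪w, h⟫ = ‖P h‖`.
-/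

open scoped RealInnerProductSpace

section Approximation

variable {ι H : Type*} [NormedAddCommGroup H] [InnerProductSpace ℝ H]

theorem sq_inner_linearCombination_le (g : ι → H) {a : ι →₀ ℝ} {s : Finset ι}
    (ha : a.support ⊆ s) (h : H) :
    ⟪Finsupp.linearCombination ℝ g a, h⟫ ^ 2 ≤
      (a.sum fun _ c => c ^ 2) * ∑ i ∈ s, ⟪g i, h⟫ ^ 2 := by
  have hexpand : ⟪Finsupp.linearCombination ℝ g a, h⟫ = ∑ i ∈ s, a i * ⟪g i, h⟫ := by
    rw [Finsupp.linearCombination_apply, Finsupp.sum_of_support_subset a ha _ (by simp),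
      sum_inner]
    simp only [real_inner_smul_left]
  rw [hexpand, Finsupp.sum_of_support_subset a ha _ (by simp)]
  exact Finset.sum_mul_sq_le_sq_mul_sq s _ _

theorem IsCompact.exists_finset_dist_linearCombination_lt {g : ι → H}
    (hdense : Dense (Submodule.span ℝ (Set.range g) : Set H)) {K : Set H} (hK : IsCompact K)
    {ε : ℝ} (hε : 0 < ε) :
    ∃ t : Finset (ι →₀ ℝ), ∀ w ∈ K, ∃ a ∈ t, dist w (Finsupp.linearCombination ℝ g a) < ε := by
  have hcover : K ⊆ ⋃ a : ι →₀ ℝ, Metric.ball (Finsupp.linearCombination ℝ g a) ε := by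
    intro w _
    obtain ⟨v, hv, hwv⟩ := hdense.exists_dist_lt w hε
    rw [SetLike.mem_coe, ← Finsupp.range_linearCombination] at hv
    obtain ⟨a, rfl⟩ := hv
    exact Set.mem_iUnion.mpr ⟨a, Metric.mem_ball.mpr hwv⟩
  obtain ⟨t, ht⟩ := hK.elim_finite_subcover _ (fun _ => Metric.isOpen_ball) hcover
  refine ⟨t, fun w hw => ?_⟩
  obtain ⟨a, hat, hwa⟩ := Set.mem_iUnion₂.mp (ht hw)
  exact ⟨a, hat, hwa⟩

theorem IsCompact.exists_uniform_approx_by_span {g : ℕ → H}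
    (hdense : Dense (Submodule.span ℝ (Set.range g) : Set H)) {K : Set H} (hK : IsCompact K)
    {ε : ℝ} (hε : 0 < ε) :
    ∃ N : ℕ, ∃ B : ℝ, 0 < B ∧ ∀ w ∈ K, ∃ v : H, dist w v < ε ∧
      ∀ n, N ≤ n → ∀ h : H, ⟪v, h⟫ ^ 2 ≤ B * ∑ i ∈ Finset.range n, ⟪g i, h⟫ ^ 2 := by
  obtain ⟨t, ht⟩ := hK.exists_finset_dist_linearCombination_lt hdense hε
  let energy : (ℕ →₀ ℝ) → ℝ := fun a => a.sum fun _ c => c ^ 2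
  have henergy_nonneg : ∀ a, 0 ≤ energy a := fun a =>
    Finset.sum_nonneg fun _ _ => sq_nonneg _
  refine ⟨t.sup fun a => a.support.sup id + 1, ∑ a ∈ t, energy a + 1,
    by linarith [Finset.sum_nonneg fun a (_ : a ∈ t) => henergy_nonneg a], fun w hw => ?_⟩
  obtain ⟨a, hat, hwa⟩ := ht w hw
  refine ⟨Finsupp.linearCombination ℝ g a, hwa, fun n hn h => ?_⟩
  have hsupp : a.support ⊆ Finset.range n := fun i hi => by
    have hi_le : i ≤ a.support.sup id := Finset.le_sup (f := id) hi
    have hsup_le := Finset.le_sup (f := fun a : ℕ →₀ ℝ => a.support.sup id + 1) hat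
    exact Finset.mem_range.mpr (by omega)
  have henergy_le : energy a ≤ ∑ a ∈ t, energy a + 1 := by
    linarith [Finset.single_le_sum (fun a _ => henergy_nonneg a) hat]
  calc ⟪Finsupp.linearCombination ℝ g a, h⟫ ^ 2
      ≤ energy a * ∑ i ∈ Finset.range n, ⟪g i, h⟫ ^ 2 := sq_inner_linearCombination_le g hsupp h
    _ ≤ _ := by gcongr

end Approximation

theorem inner_apply_self_eq_norm_sq_of_idempotent {H : Type*} [NormedAddCommGroup H]
    [InnerProductSpace ℝ H] {P : H →L[ℝ] H} (hP_idem : P ∘L P = P)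
    (hP_sa : ∀ x y : H, ⟪P x, y⟫ = ⟪x, P y⟫) (x : H) :
    ⟪P x, x⟫ = ‖P x‖ ^ 2 := by
  have hPP : P (P x) = P x := congrArg (fun T : H →L[ℝ] H => T x) hP_idem
  rw [← real_inner_self_eq_norm_sq, hP_sa x (P x), hPP, real_inner_comm]

theorem stmt4_general {H : Type*} [NormedAddCommGroup H] [InnerProductSpace ℝ H]
    (g : ℕ → H) (hdense : Dense (Submodule.span ℝ (Set.range g) : Set H))
    (P : H →L[ℝ] H)
    (hP_idem : P ∘L P = P)
    (hP_sa : ∀ x y : H, ⟪P x, y⟫ = ⟪x, P y⟫)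
    (hfin : FiniteDimensional ℝ (LinearMap.range (P : H →ₗ[ℝ] H)))
    {α : ℝ} (hα : 0 < α) :
    ∃ N : ℕ, 1 ≤ N ∧ ∃ c : ℝ, 0 < c ∧ ∀ n : ℕ, N ≤ n → ∀ h : H, α * ‖h‖ ≤ ‖P h‖ →
      c * ‖P h‖ ^ 2 ≤ ∑ i ∈ Finset.range n, ⟪g i, h⟫ ^ 2 := by
  let F := LinearMap.range (P : H →ₗ[ℝ] H)
  have hK : IsCompact ((↑) '' Metric.sphere (0 : F) 1 : Set H) :=
    (isCompact_sphere (0 : F) 1).image continuous_subtype_val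
  obtain ⟨N, B, hB, happrox⟩ := hK.exists_uniform_approx_by_span hdense (half_pos hα)
  refine ⟨N + 1, le_add_self, 1 / (4 * B), by positivity, fun n hn h hh => ?_⟩
  rcases eq_or_ne (P h) 0 with hPh | hPh
  · simpa [hPh] using Finset.sum_nonneg fun i _ => sq_nonneg ⟪g i, h⟫
  have hnorm : 0 < ‖P h‖ := norm_pos_iff.mpr hPh
  let w : F := ⟨‖P h‖⁻¹ • P h, F.smul_mem _ ⟨h, rfl⟩⟩
  have hw : w ∈ Metric.sphere (0 : F) 1 := by
    simp [w, norm_smul, inv_mul_cancel₀ hnorm.ne']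
  have hwh : ⟪(w : H), h⟫ = ‖P h‖ := by
    simp only [w, real_inner_smul_left, inner_apply_self_eq_norm_sq_of_idempotent hP_idem hP_sa]
    field_simp
  obtain ⟨v, hwv, hv⟩ := happrox w ⟨w, hw, rfl⟩
  have hvh : ‖P h‖ / 2 ≤ ⟪v, h⟫ := by
    have hCS := real_inner_le_norm ((w : H) - v) h
    have herr : ‖(w : H) - v‖ * ‖h‖ ≤ α / 2 * ‖h‖ := by
      rw [← dist_eq_norm]; gcongr
    rw [inner_sub_left, hwh] at hCS
    linarith
  calc 1 / (4 * B) * ‖P h‖ ^ 2 = (‖P h‖ / 2) ^ 2 / B := by field_simp; ring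
    _ ≤ ⟪v, h⟫ ^ 2 / B := by gcongr
    _ ≤ _ := by rw [div_le_iff₀' hB]; exact hv n (by omega) h

/-- Lemma 8.1: if the linear span of the sequence `(g_i)` is dense in the Hilbert space `H`,
then for every orthogonal projection `Π` with finite-dimensional range and every `α > 0` there
are `N ≥ 1` and `c > 0` such that `Σ_{i<n} ⟨g_i, h⟩² ≥ c ‖Πh‖²` whenever `n ≥ N` and
`‖Πh‖ ≥ α‖h‖`. -/
theorem stmt4 {H : Type*} [NormedAddCommGroup H] [InnerProductSpace ℝ H] [CompleteSpace H]
    (g : ℕ → H) (hdense : Dense (Submodule.span ℝ (Set.range g) : Set H))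
    (P : H →L[ℝ] H)
    (hP_idem : P ∘L P = P)
    (hP_sa : ∀ x y : H, ⟪P x, y⟫ = ⟪x, P y⟫)
    (hfin : FiniteDimensional ℝ (LinearMap.range (P : H →ₗ[ℝ] H)))
    {α : ℝ} (hα : 0 < α) :
    ∃ N : ℕ, 1 ≤ N ∧ ∃ c : ℝ, 0 < c ∧ ∀ n : ℕ, N ≤ n → ∀ h : H, α * ‖h‖ ≤ ‖P h‖ →
      c * ‖P h‖ ^ 2 ≤ ∑ i ∈ Finset.range n, ⟪g i, h⟫ ^ 2 :=
  stmt4_general g hdense P hP_idem hP_sa hfin hα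
end

section
/- Let (Ω, ℱ, ℙ) be a probability space with a filtration (ℱ_k)_{k∈ℕ}, let η' ∈ [0,1) and C_L ≥ 0 be constants, and let (V_k)_{k∈ℕ} be nonnegative random variables such that V_k is ℱ_k-measurable for each k, V₀ is almost surely equal to a constant v₀ ≥ 0, and for every k ≥ 1 one has E[exp(V_k) | ℱ_{k−1}] ≤ exp(η' V_{k−1} + C_L) almost surely. For η > 0 set κ = η/(1−η'). Then: (i) for every η > 0 and p > 0 with ηp ≤ 1 and every n ∈ ℕ, E exp(ηp V_n) ≤ exp(pη(η')ⁿ v₀ + pκ C_L); and (ii) for every η > 0 and p > 0 with κp ≤ 1 and every n ∈ ℕ, E exp(ηp Σ_{k=0}^n V_k) ≤ exp(pκ v₀ + pκ C_L n). -/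
/-!
Conditional Jensen for the concave map `y ↦ y ^ γ`, `γ ∈ [0, 1]`, turns the drift hypothesis into
`E[exp (γ V_{n+1}) | ℱ_n] ≤ exp (γ η' V_n + γ C_L)`. Multiplying by an `ℱ_n`-measurable weight and
integrating therefore trades the last step of the process for a factor `exp (γ C_L)` and the smaller
exponent `γ η'` on `V_n`. With weight `1` this iterates to (i), the constants summing to at most
`γ C_L / (1 - η')`. For (ii) the weight is `exp (β ∑_{k ≤ n} V_k)` with `β = ηp`; the exponent on
the last term then evolves as `γ ↦ β + γ η'`, which never exceeds `δ = κp` because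
`β + δ η' = δ`. Working with lower Lebesgue integrals spares all integrability side conditions on
the weights.
-/

open MeasureTheory Real
open scoped ENNReal

namespace MeasureTheory

variable {Ω : Type*} {m m0 : MeasurableSpace Ω} {μ : Measure Ω}

theorem lintegral_mul_condLExp (hm : m ≤ m0) [SigmaFinite (μ.trim hm)] {f g : Ω → ℝ≥0∞}
    (hf : Measurable[m] f) (hg : AEMeasurable g μ) :
    ∫⁻ ω, f ω * μ⁻[g|m] ω ∂μ = ∫⁻ ω, f ω * g ω ∂μ := by
  have htrim : (μ.withDensity μ⁻[g|m]).trim hm = (μ.withDensity g).trim hm := by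
    refine @Measure.ext _ m _ _ fun s hs => ?_
    rw [trim_measurableSet_eq hm hs, trim_measurableSet_eq hm hs, withDensity_apply _ (hm s hs),
      withDensity_apply _ (hm s hs), setLIntegral_condLExp hm μ g hs]
  have hf0 : AEMeasurable f μ := (hf.mono hm le_rfl).aemeasurable
  calc ∫⁻ ω, f ω * μ⁻[g|m] ω ∂μ = ∫⁻ ω, f ω ∂μ.withDensity μ⁻[g|m] := by
        rw [lintegral_withDensity_eq_lintegral_mul₀ (measurable_condLExp' m μ g).aemeasurable hf0]
        simp only [Pi.mul_apply, mul_comm]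
    _ = ∫⁻ ω, f ω ∂μ.withDensity g := by rw [← lintegral_trim hm hf, htrim, lintegral_trim hm hf]
    _ = ∫⁻ ω, f ω * g ω ∂μ := by
        rw [lintegral_withDensity_eq_lintegral_mul₀ hg hf0]
        simp only [Pi.mul_apply, mul_comm]

theorem lintegral_mul_ofReal_condExp (hm : m ≤ m0) [SigmaFinite (μ.trim hm)] {f : Ω → ℝ≥0∞}
    {g : Ω → ℝ} (hf : Measurable[m] f) (hg : Integrable g μ) (hg0 : 0 ≤ᵐ[μ] g) :
    ∫⁻ ω, f ω * ENNReal.ofReal (μ[g|m] ω) ∂μ = ∫⁻ ω, f ω * ENNReal.ofReal (g ω) ∂μ := by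
  rw [← lintegral_mul_condLExp hm hf hg.aemeasurable.ennreal_ofReal]
  refine lintegral_congr_ae ?_
  filter_upwards [condLExp_ofReal m hg hg0] with ω h
  rw [h]

theorem integrable_exp_mul_of_nonneg_of_le_one [IsFiniteMeasure μ] {X : Ω → ℝ}
    (hX : Integrable (fun ω => exp (X ω)) μ) {γ : ℝ} (hγ0 : 0 ≤ γ) (hγ1 : γ ≤ 1) :
    Integrable (fun ω => exp (γ * X ω)) μ :=
  ProbabilityTheory.integrable_exp_mul_of_le_of_le (by simp) (by simpa using hX) hγ0 hγ1

theorem condExp_exp_mul_le [IsFiniteMeasure μ] (hm : m ≤ m0) {X u : Ω → ℝ}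
    (hX : Integrable (fun ω => exp (X ω)) μ)
    (hXu : μ[fun ω => exp (X ω)|m] ≤ᵐ[μ] fun ω => exp (u ω)) {γ : ℝ} (hγ0 : 0 ≤ γ)
    (hγ1 : γ ≤ 1) :
    μ[fun ω => exp (γ * X ω)|m] ≤ᵐ[μ] fun ω => exp (γ * u ω) := by
  have hγX : (fun ω => exp (γ * X ω)) = (· ^ γ) ∘ fun ω => exp (X ω) := by
    ext ω
    simp [← exp_mul, mul_comm]
  have hJensen := (Real.concaveOn_rpow hγ0 hγ1).condExp_map_le hm
    (continuousOn_id.rpow_const fun _ _ => Or.inr hγ0).upperSemicontinuousOn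
    (ae_of_all _ fun ω => (exp_pos (X ω)).le) isClosed_Ici hX
    (hγX ▸ integrable_exp_mul_of_nonneg_of_le_one hX hγ0 hγ1)
  filter_upwards [hJensen, hXu, condExp_nonneg (m := m) (ae_of_all μ fun ω => (exp_pos (X ω)).le)]
    with ω hω hω' h0
  rw [hγX]
  calc _ ≤ (μ[fun ω => exp (X ω)|m] ω) ^ γ := hω
    _ ≤ exp (u ω) ^ γ := rpow_le_rpow h0 hω' hγ0
    _ = exp (γ * u ω) := by rw [← exp_mul, mul_comm]

theorem lintegral_mul_exp_mul_le_of_condExp_le [IsFiniteMeasure μ] (hm : m ≤ m0)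
    {f : Ω → ℝ≥0∞} (hf : Measurable[m] f) {X u : Ω → ℝ}
    (hX : Integrable (fun ω => exp (X ω)) μ)
    (hXu : μ[fun ω => exp (X ω)|m] ≤ᵐ[μ] fun ω => exp (u ω)) {γ : ℝ} (hγ0 : 0 ≤ γ)
    (hγ1 : γ ≤ 1) :
    ∫⁻ ω, f ω * ENNReal.ofReal (exp (γ * X ω)) ∂μ ≤
      ∫⁻ ω, f ω * ENNReal.ofReal (exp (γ * u ω)) ∂μ := by
  rw [← lintegral_mul_ofReal_condExp hm hf (integrable_exp_mul_of_nonneg_of_le_one hX hγ0 hγ1)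
    (ae_of_all _ fun ω => (exp_pos _).le)]
  refine lintegral_mono_ae ?_
  filter_upwards [condExp_exp_mul_le hm hX hXu hγ0 hγ1] with ω hω
  gcongr

end MeasureTheory

section ExponentialDrift

variable {Ω : Type*} {m0 : MeasurableSpace Ω} {μ : Measure Ω} {ℱ : Filtration ℕ m0}
  {V : ℕ → Ω → ℝ} {η' C : ℝ}

theorem lintegral_mul_exp_mul_succ_le_of_drift [IsFiniteMeasure μ] {n : ℕ}
    (hint : Integrable (fun ω => exp (V (n + 1) ω)) μ)
    (hdrift : μ[fun ω => exp (V (n + 1) ω)|ℱ n] ≤ᵐ[μ] fun ω => exp (η' * V n ω + C))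
    {f : Ω → ℝ≥0∞} (hf : Measurable[ℱ n] f) {γ : ℝ} (hγ0 : 0 ≤ γ) (hγ1 : γ ≤ 1) :
    ∫⁻ ω, f ω * ENNReal.ofReal (exp (γ * V (n + 1) ω)) ∂μ ≤
      ENNReal.ofReal (exp (γ * C)) * ∫⁻ ω, f ω * ENNReal.ofReal (exp (γ * η' * V n ω)) ∂μ := by
  refine (lintegral_mul_exp_mul_le_of_condExp_le (ℱ.le n) hf hint hdrift hγ0 hγ1).trans_eq ?_
  rw [← lintegral_const_mul' _ _ ENNReal.ofReal_ne_top]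
  congr with ω
  rw [mul_left_comm, ← ENNReal.ofReal_mul (exp_pos _).le, ← exp_add]
  ring_nf

theorem lintegral_exp_mul_le_of_drift [IsProbabilityMeasure μ] (hη'0 : 0 ≤ η') (hη'1 : η' < 1)
    (hC : 0 ≤ C) {v₀ : ℝ} (hV0 : ∀ᵐ ω ∂μ, V 0 ω = v₀)
    (hint : ∀ n, Integrable (fun ω => exp (V n ω)) μ)
    (hdrift : ∀ n, μ[fun ω => exp (V (n + 1) ω)|ℱ n] ≤ᵐ[μ] fun ω => exp (η' * V n ω + C))
    (n : ℕ) {γ : ℝ} (hγ0 : 0 ≤ γ) (hγ1 : γ ≤ 1) :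
    ∫⁻ ω, ENNReal.ofReal (exp (γ * V n ω)) ∂μ ≤
      ENNReal.ofReal (exp (γ * η' ^ n * v₀ + γ * C / (1 - η'))) := by
  induction n generalizing γ with
  | zero =>
    rw [lintegral_congr_ae (hV0.mono fun ω h => by rw [h]), lintegral_const, measure_univ,
      mul_one]
    gcongr
    simpa using div_nonneg (mul_nonneg hγ0 hC) (by linarith : (0 : ℝ) ≤ 1 - η')
  | succ n ih =>
    have hstep := lintegral_mul_exp_mul_succ_le_of_drift (hint (n + 1)) (hdrift n)
      (measurable_const (a := (1 : ℝ≥0∞))) hγ0 hγ1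
    simp only [one_mul] at hstep
    refine (hstep.trans (mul_le_mul_right (ih (mul_nonneg hγ0 hη'0) ?_) _)).trans_eq ?_
    · nlinarith
    rw [← ENNReal.ofReal_mul (exp_pos _).le, ← exp_add]
    have : 1 - η' ≠ 0 := by linarith
    congr 2
    field_simp
    ring

theorem lintegral_exp_mul_sum_add_le_of_drift [IsProbabilityMeasure μ] (hV : Adapted ℱ V)
    (hη'0 : 0 ≤ η') (hC : 0 ≤ C) {v₀ : ℝ} (hv₀ : 0 ≤ v₀) (hV0 : ∀ᵐ ω ∂μ, V 0 ω = v₀)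
    (hint : ∀ n, Integrable (fun ω => exp (V n ω)) μ)
    (hdrift : ∀ n, μ[fun ω => exp (V (n + 1) ω)|ℱ n] ≤ᵐ[μ] fun ω => exp (η' * V n ω + C))
    {β δ : ℝ} (hβ : 0 ≤ β) (hδ : δ ≤ 1) (hβδ : β + δ * η' ≤ δ)
    (n : ℕ) {γ : ℝ} (hγ0 : 0 ≤ γ) (hγδ : γ ≤ δ) :
    ∫⁻ ω, ENNReal.ofReal (exp (β * ∑ k ∈ Finset.range n, V k ω + γ * V n ω)) ∂μ ≤
      ENNReal.ofReal (exp (δ * v₀ + δ * C * n)) := by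
  induction n generalizing γ with
  | zero =>
    simp only [Finset.range_zero, Finset.sum_empty, mul_zero, zero_add, Nat.cast_zero, add_zero]
    rw [lintegral_congr_ae (hV0.mono fun ω h => by rw [h]), lintegral_const, measure_univ,
      mul_one]
    gcongr
  | succ n ih =>
    have hpast : Measurable[ℱ n]
        fun ω => ENNReal.ofReal (exp (β * ∑ k ∈ Finset.range (n + 1), V k ω)) := by
      refine (measurable_exp.comp
        ((Finset.measurable_fun_sum _ fun k hk => ?_).const_mul β)).ennreal_ofReal
      exact (hV k).mono (ℱ.mono (Nat.lt_succ_iff.mp (Finset.mem_range.mp hk))) le_rfl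
    have hstep := lintegral_mul_exp_mul_succ_le_of_drift (hint (n + 1)) (hdrift n) hpast hγ0
      (hγδ.trans hδ)
    calc ∫⁻ ω, ENNReal.ofReal (exp (β * ∑ k ∈ Finset.range (n + 1), V k ω + γ * V (n + 1) ω)) ∂μ
        = ∫⁻ ω, ENNReal.ofReal (exp (β * ∑ k ∈ Finset.range (n + 1), V k ω)) *
            ENNReal.ofReal (exp (γ * V (n + 1) ω)) ∂μ := by
          simp only [← ENNReal.ofReal_mul (exp_pos _).le, ← exp_add]
      _ ≤ ENNReal.ofReal (exp (γ * C)) * ∫⁻ ω,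
            ENNReal.ofReal (exp (β * ∑ k ∈ Finset.range n, V k ω + (β + γ * η') * V n ω)) ∂μ := by
          refine hstep.trans_eq ?_
          congr 2 with ω
          rw [← ENNReal.ofReal_mul (exp_pos _).le, ← exp_add, Finset.sum_range_succ]
          ring_nf
      _ ≤ ENNReal.ofReal (exp (γ * C)) * ENNReal.ofReal (exp (δ * v₀ + δ * C * n)) := by
          gcongr
          exact ih (by positivity) (by nlinarith)
      _ ≤ ENNReal.ofReal (exp (δ * v₀ + δ * C * (n + 1 : ℕ))) := by
          rw [← ENNReal.ofReal_mul (exp_pos _).le, ← exp_add]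
          refine ENNReal.ofReal_le_ofReal (exp_le_exp.2 ?_)
          push_cast
          nlinarith [mul_le_mul_of_nonneg_right hγδ hC]

end ExponentialDrift

theorem stmt5_general {Ω : Type*} {m0 : MeasurableSpace Ω} (ℙ : Measure Ω) [IsProbabilityMeasure ℙ]
    (ℱ : Filtration ℕ m0)
    {η' C_L : ℝ} (hη' : η' ∈ Set.Ico (0:ℝ) 1) (hCL : 0 ≤ C_L)
    (V : ℕ → Ω → ℝ)
    (hV_adapted : ∀ k, StronglyMeasurable[ℱ k] (V k))
    {v₀ : ℝ} (hv₀ : 0 ≤ v₀) (hV0 : ∀ᵐ ω ∂ℙ, V 0 ω = v₀)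
    (hint : ∀ k, Integrable (fun ω => Real.exp (V k ω)) ℙ)
    (hrec : ∀ k : ℕ, 1 ≤ k → ∀ᵐ ω ∂ℙ,
      (ℙ[fun ω' => Real.exp (V k ω') | ℱ (k - 1)]) ω ≤ Real.exp (η' * V (k - 1) ω + C_L)) :
    (∀ η p : ℝ, 0 < η → 0 < p → η * p ≤ 1 → ∀ n : ℕ,
      ∫⁻ ω, ENNReal.ofReal (Real.exp (η * p * V n ω)) ∂ℙ ≤
        ENNReal.ofReal (Real.exp (p * η * η' ^ n * v₀ + p * (η / (1 - η')) * C_L))) ∧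
    (∀ η p : ℝ, 0 < η → 0 < p → (η / (1 - η')) * p ≤ 1 → ∀ n : ℕ,
      ∫⁻ ω, ENNReal.ofReal (Real.exp (η * p * ∑ k ∈ Finset.range (n + 1), V k ω)) ∂ℙ ≤
        ENNReal.ofReal (Real.exp (p * (η / (1 - η')) * v₀ + p * (η / (1 - η')) * C_L * n))) := by
  obtain ⟨hη'0, hη'1⟩ := hη'
  have hη'1' : 1 - η' ≠ 0 := by linarith
  have hdrift : ∀ n, ℙ[fun ω => exp (V (n + 1) ω)|ℱ n] ≤ᵐ[ℙ]
      fun ω => exp (η' * V n ω + C_L) := fun n => by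
    have h := hrec (n + 1) n.succ_pos
    rwa [Nat.add_sub_cancel] at h
  refine ⟨fun η p hη hp hηp n => ?_, fun η p hη hp hκp n => ?_⟩
  · refine (lintegral_exp_mul_le_of_drift hη'0 hη'1 hCL hV0 hint hdrift n (by positivity)
      hηp).trans_eq ?_
    congr 2
    field_simp
  · have hβδ : η * p + p * (η / (1 - η')) * η' = p * (η / (1 - η')) := by
      field_simp
      ring
    have hδη' : 0 ≤ p * (η / (1 - η')) * η' := mul_nonneg (by positivity) hη'0
    simpa only [Finset.sum_range_succ, mul_add] using
      lintegral_exp_mul_sum_add_le_of_drift (fun k => (hV_adapted k).measurable) hη'0 hCL hv₀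
        hV0 hint hdrift (by positivity) (by linarith) hβδ.le n (γ := η * p) (by positivity)
        (by linarith)

/-- Proposition 6.1: iterated exponential Lyapunov bounds. If
`E[exp(V_k) | ℱ_{k-1}] ≤ exp(η' V_{k-1} + C_L)` a.s. with `η' ∈ [0,1)` and `V₀ = v₀` a.s., then
(i) `E exp(ηp V_n) ≤ exp(pη(η')ⁿ v₀ + pκ C_L)` whenever `ηp ≤ 1`, and
(ii) `E exp(ηp Σ_{k=0}^n V_k) ≤ exp(pκ v₀ + pκ C_L n)` whenever `κp ≤ 1`, where
`κ = η/(1-η')`. -/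
theorem stmt5 {Ω : Type*} {m0 : MeasurableSpace Ω} (ℙ : Measure Ω) [IsProbabilityMeasure ℙ]
    (ℱ : Filtration ℕ m0)
    {η' C_L : ℝ} (hη' : η' ∈ Set.Ico (0:ℝ) 1) (hCL : 0 ≤ C_L)
    (V : ℕ → Ω → ℝ) (hV_nonneg : ∀ k ω, 0 ≤ V k ω)
    (hV_adapted : ∀ k, StronglyMeasurable[ℱ k] (V k))
    {v₀ : ℝ} (hv₀ : 0 ≤ v₀) (hV0 : ∀ᵐ ω ∂ℙ, V 0 ω = v₀)
    (hint : ∀ k, Integrable (fun ω => Real.exp (V k ω)) ℙ)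
    (hrec : ∀ k : ℕ, 1 ≤ k → ∀ᵐ ω ∂ℙ,
      (ℙ[fun ω' => Real.exp (V k ω') | ℱ (k - 1)]) ω ≤ Real.exp (η' * V (k - 1) ω + C_L)) :
    (∀ η p : ℝ, 0 < η → 0 < p → η * p ≤ 1 → ∀ n : ℕ,
      ∫⁻ ω, ENNReal.ofReal (Real.exp (η * p * V n ω)) ∂ℙ ≤
        ENNReal.ofReal (Real.exp (p * η * η' ^ n * v₀ + p * (η / (1 - η')) * C_L))) ∧
    (∀ η p : ℝ, 0 < η → 0 < p → (η / (1 - η')) * p ≤ 1 → ∀ n : ℕ,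
      ∫⁻ ω, ENNReal.ofReal (Real.exp (η * p * ∑ k ∈ Finset.range (n + 1), V k ω)) ∂ℙ ≤
        ENNReal.ofReal (Real.exp (p * (η / (1 - η')) * v₀ + p * (η / (1 - η')) * C_L * n))) :=
  stmt5_general ℙ ℱ hη' hCL V hV_adapted hv₀ hV0 hint hrec
end

section
/- Let (Ω, ℱ, ℙ) be a probability space with a filtration (ℱ_k)_{k∈ℕ}, let η' ∈ [0,1), C_L ≥ 0, η > 0 and C_J ∈ ℝ be constants, and let (V_k)_{k∈ℕ} be nonnegative random variables with V_k ℱ_k-measurable, V₀ almost surely equal to a constant v₀ ≥ 0, and E[exp(V_k) | ℱ_{k−1}] ≤ exp(η' V_{k−1} + C_L) almost surely for every k ≥ 1. Let (X_k)_{k≥1} be nonnegative random variables such that X_k is ℱ_k-measurable and, for every real q ≥ 1 and every k ≥ 1, E[X_k^q | ℱ_{k−1}] ≤ exp(qη V_{k−1} + q C_J) almost surely. Set κ = η/(1−η') and C_T = C_J + κ C_L. Then for every p ≥ 0 with pκ < 1 and every n ≥ 1, E[(∏_{k=1}^n X_k)^p] ≤ exp(pκ v₀ + p C_T n). -/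
/-!
Let `θ = pκ ∈ [0, 1)` and `q = p / (1 - θ)`, so that `X_k^p e^{θ V_k} = (X_k^q)^{1-θ} (e^{V_k})^θ`.
Weighted AM-GM with `ℱ_{k-1}`-measurable weights gives a conditional Hölder inequality:
`E[Zᵢ | ℱ_{k-1}] ≤ Bᵢ` implies `E[Z₁^{1-θ} Z₂^θ | ℱ_{k-1}] ≤ B₁^{1-θ} B₂^θ`. Applied to the two
hypothesised bounds (for `q < 1` the moment bound comes from the case `q = 1` by the same
inequality with `Z₂ = 1`), and using `(1 - θ) q η + θ η' = θ`, it yields the one-step estimate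
`E[X_k^p e^{θ V_k} | ℱ_{k-1}] ≤ e^{p C_T} e^{θ V_{k-1}}`. Iterating through the tower property
gives `E[∏ X_k^p e^{θ V_n}] ≤ e^{θ v₀ + p C_T n}`, and `e^{θ V_n} ≥ 1`.

The weights are unbounded, so the argument uses the Lebesgue conditional expectation `μ⁻[·|m]`
of `ℝ≥0∞`-valued functions, from which measurable factors pull out without integrability.
-/

open MeasureTheory
open scoped ENNReal

theorem rpow_mul_rpow_le_scaled_arith_mean {a b x y s t : ℝ} (ha : 0 ≤ a) (hb : 0 ≤ b)
    (hab : a + b = 1) (hx : 0 ≤ x) (hy : 0 ≤ y) (hs : 0 < s) (ht : 0 < t) :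
    x ^ a * y ^ b ≤ s ^ a * t ^ b * (a * x / s + b * y / t) := by
  have h := Real.geom_mean_le_arith_mean2_weighted ha hb (div_nonneg hx hs.le)
    (div_nonneg hy ht.le) hab
  rw [Real.div_rpow hx hs.le, Real.div_rpow hy ht.le, div_mul_div_comm,
    div_le_iff₀ (by positivity)] at h
  exact h.trans_eq (by ring)

section

variable {Ω : Type*} {m m0 : MeasurableSpace Ω} {μ : Measure Ω}

theorem lintegral_mul_condLExp (hm : m ≤ m0) [SigmaFinite (μ.trim hm)] {H X : Ω → ℝ≥0∞}
    (hH : Measurable[m] H) (hX : Measurable X) :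
    ∫⁻ ω, H ω * μ⁻[X|m] ω ∂μ = ∫⁻ ω, H ω * X ω ∂μ := by
  have htrim : (μ.withDensity μ⁻[X|m]).trim hm = (μ.withDensity X).trim hm := by
    refine @Measure.ext _ m _ _ fun s hs => ?_
    rw [trim_measurableSet_eq hm hs, trim_measurableSet_eq hm hs, withDensity_apply _ (hm s hs),
      withDensity_apply _ (hm s hs), setLIntegral_condLExp hm μ X hs]
  have h := congrArg (fun ν => ∫⁻ ω, H ω ∂ν) htrim
  simp only [lintegral_trim hm hH] at h
  rw [lintegral_withDensity_eq_lintegral_mul _ ((measurable_condLExp _ _ _).mono hm le_rfl)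
    (hH.mono hm le_rfl), lintegral_withDensity_eq_lintegral_mul _ hX (hH.mono hm le_rfl)] at h
  simpa only [Pi.mul_apply, mul_comm] using h

theorem condLExp_mul_of_measurable_left (hm : m ≤ m0) [SigmaFinite (μ.trim hm)]
    {H X : Ω → ℝ≥0∞} (hH : Measurable[m] H) (hX : Measurable X) :
    μ⁻[H * X|m] =ᵐ[μ] H * μ⁻[X|m] := by
  refine (ae_eq_condLExp hm μ _ (hH.mul (measurable_condLExp _ _ _)) fun s hs => ?_).symm
  have hHs : Measurable[m] (s.indicator H) := hH.indicator hs
  simp only [Pi.mul_apply, ← lintegral_indicator (hm s hs), Set.indicator_mul_left]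
  exact lintegral_mul_condLExp hm hHs hX

theorem condLExp_ofReal_le_of_condExp_le {f B : Ω → ℝ} (hf : Integrable f μ) (hf0 : 0 ≤ᵐ[μ] f)
    (h : μ[f|m] ≤ᵐ[μ] B) :
    μ⁻[fun ω => ENNReal.ofReal (f ω)|m] ≤ᵐ[μ] fun ω => ENNReal.ofReal (B ω) :=
  (condLExp_ofReal m hf hf0).trans_le (h.mono fun _ => ENNReal.ofReal_le_ofReal)

theorem condLExp_ofReal_rpow_mul_rpow_le (hm : m ≤ m0) [SigmaFinite (μ.trim hm)]
    {Z₁ Z₂ B₁ B₂ : Ω → ℝ} {a b : ℝ} (ha : 0 ≤ a) (hb : 0 ≤ b) (hab : a + b = 1)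
    (hZ₁ : Measurable Z₁) (hZ₂ : Measurable Z₂) (hZ₁0 : ∀ ω, 0 ≤ Z₁ ω) (hZ₂0 : ∀ ω, 0 ≤ Z₂ ω)
    (hB₁ : Measurable[m] B₁) (hB₂ : Measurable[m] B₂) (hB₁0 : ∀ ω, 0 < B₁ ω) (hB₂0 : ∀ ω, 0 < B₂ ω)
    (h₁ : μ⁻[fun ω => ENNReal.ofReal (Z₁ ω)|m] ≤ᵐ[μ] fun ω => ENNReal.ofReal (B₁ ω))
    (h₂ : μ⁻[fun ω => ENNReal.ofReal (Z₂ ω)|m] ≤ᵐ[μ] fun ω => ENNReal.ofReal (B₂ ω)) :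
    μ⁻[fun ω => ENNReal.ofReal (Z₁ ω ^ a * Z₂ ω ^ b)|m] ≤ᵐ[μ]
      fun ω => ENNReal.ofReal (B₁ ω ^ a * B₂ ω ^ b) := by
  set G : Ω → ℝ := fun ω => B₁ ω ^ a * B₂ ω ^ b
  set c₁ : Ω → ℝ := fun ω => a * G ω / B₁ ω
  set c₂ : Ω → ℝ := fun ω => b * G ω / B₂ ω
  have hG0 ω : 0 < G ω :=
    mul_pos (Real.rpow_pos_of_pos (hB₁0 ω) a) (Real.rpow_pos_of_pos (hB₂0 ω) b)
  have hc₁0 ω : 0 ≤ c₁ ω := div_nonneg (mul_nonneg ha (hG0 ω).le) (hB₁0 ω).le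
  have hc₂0 ω : 0 ≤ c₂ ω := div_nonneg (mul_nonneg hb (hG0 ω).le) (hB₂0 ω).le
  have hc₁ : Measurable[m] fun ω => ENNReal.ofReal (c₁ ω) := by unfold c₁ G; fun_prop
  have hc₂ : Measurable[m] fun ω => ENNReal.ofReal (c₂ ω) := by unfold c₂ G; fun_prop
  have hsplit ω {u v : ℝ} (hu : 0 ≤ u) (hv : 0 ≤ v) :
      ENNReal.ofReal (c₁ ω * u + c₂ ω * v) =
        ENNReal.ofReal (c₁ ω) * ENNReal.ofReal u + ENNReal.ofReal (c₂ ω) * ENNReal.ofReal v := by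
    rw [ENNReal.ofReal_add (mul_nonneg (hc₁0 ω) hu) (mul_nonneg (hc₂0 ω) hv),
      ENNReal.ofReal_mul (hc₁0 ω), ENNReal.ofReal_mul (hc₂0 ω)]
  have hpoint ω : Z₁ ω ^ a * Z₂ ω ^ b ≤ c₁ ω * Z₁ ω + c₂ ω * Z₂ ω :=
    (rpow_mul_rpow_le_scaled_arith_mean ha hb hab (hZ₁0 ω) (hZ₂0 ω) (hB₁0 ω) (hB₂0 ω)).trans_eq
      (by ring)
  have hmean ω : c₁ ω * B₁ ω + c₂ ω * B₂ ω = G ω := by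
    rw [div_mul_cancel₀ _ (hB₁0 ω).ne', div_mul_cancel₀ _ (hB₂0 ω).ne']
    linear_combination G ω * hab
  have hle : (fun ω => ENNReal.ofReal (Z₁ ω ^ a * Z₂ ω ^ b)) ≤ᵐ[μ]
      (fun ω => ENNReal.ofReal (c₁ ω)) * (fun ω => ENNReal.ofReal (Z₁ ω)) +
        (fun ω => ENNReal.ofReal (c₂ ω)) * (fun ω => ENNReal.ofReal (Z₂ ω)) :=
    Filter.Eventually.of_forall fun ω =>
      (ENNReal.ofReal_le_ofReal (hpoint ω)).trans_eq (hsplit ω (hZ₁0 ω) (hZ₂0 ω))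
  filter_upwards [condLExp_mono (mΩ := m) hle,
    condLExp_add_left (mΩ := m) _ ((hc₁.mono hm le_rfl).mul hZ₁.ennreal_ofReal).aemeasurable,
    condLExp_mul_of_measurable_left hm hc₁ hZ₁.ennreal_ofReal,
    condLExp_mul_of_measurable_left hm hc₂ hZ₂.ennreal_ofReal, h₁, h₂]
    with ω hω hadd hmul₁ hmul₂ hω₁ hω₂
  rw [hadd, Pi.add_apply, hmul₁, hmul₂, Pi.mul_apply, Pi.mul_apply] at hω
  change _ ≤ ENNReal.ofReal (G ω)
  rw [← hmean, hsplit ω (hB₁0 ω).le (hB₂0 ω).le]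
  exact hω.trans (by gcongr)

theorem condLExp_ofReal_rpow_le_of_le_one (hm : m ≤ m0) [SigmaFinite (μ.trim hm)]
    {Z B : Ω → ℝ} {q : ℝ} (hq0 : 0 ≤ q) (hq1 : q ≤ 1) (hZ : Measurable Z) (hZ0 : ∀ ω, 0 ≤ Z ω)
    (hB : Measurable[m] B) (hB0 : ∀ ω, 0 < B ω)
    (h : μ⁻[fun ω => ENNReal.ofReal (Z ω)|m] ≤ᵐ[μ] fun ω => ENNReal.ofReal (B ω)) :
    μ⁻[fun ω => ENNReal.ofReal (Z ω ^ q)|m] ≤ᵐ[μ] fun ω => ENNReal.ofReal (B ω ^ q) := by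
  have h₁ := condLExp_ofReal_rpow_mul_rpow_le hm hq0 (sub_nonneg.mpr hq1) (add_sub_cancel q 1)
    hZ measurable_const hZ0 (fun _ => zero_le_one) hB measurable_const hB0 (fun _ => one_pos) h
    (by rw [condLExp_const hm μ])
  simpa only [Real.one_rpow, mul_one] using h₁

theorem condLExp_ofReal_rpow_le_exp (hm : m ≤ m0) [SigmaFinite (μ.trim hm)] {X V : Ω → ℝ}
    {η C : ℝ} (hX : Measurable X) (hX0 : ∀ ω, 0 ≤ X ω) (hV : Measurable[m] V)
    (hX_int : ∀ q : ℝ, 1 ≤ q → Integrable (fun ω => X ω ^ q) μ)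
    (hX_rec : ∀ q : ℝ, 1 ≤ q →
      μ[fun ω => X ω ^ q|m] ≤ᵐ[μ] fun ω => Real.exp (q * η * V ω + q * C))
    {q : ℝ} (hq : 0 ≤ q) :
    μ⁻[fun ω => ENNReal.ofReal (X ω ^ q)|m] ≤ᵐ[μ]
      fun ω => ENNReal.ofReal (Real.exp (η * V ω + C) ^ q) := by
  have hexp : ∀ q ω, Real.exp (η * V ω + C) ^ q = Real.exp (q * η * V ω + q * C) := by
    intro q ω
    rw [← Real.exp_mul]
    ring_nf
  rcases le_total 1 q with hq1 | hq1
  · simp only [hexp]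
    exact condLExp_ofReal_le_of_condExp_le (hX_int q hq1)
      (Filter.Eventually.of_forall fun ω => Real.rpow_nonneg (hX0 ω) q) (hX_rec q hq1)
  · have h₁ := condLExp_ofReal_le_of_condExp_le (hX_int 1 le_rfl)
      (Filter.Eventually.of_forall fun ω => Real.rpow_nonneg (hX0 ω) 1) (hX_rec 1 le_rfl)
    simp only [Real.rpow_one, ← hexp 1] at h₁
    exact condLExp_ofReal_rpow_le_of_le_one hm hq hq1 hX hX0 (by fun_prop)
      (fun ω => Real.exp_pos _) h₁

theorem condLExp_ofReal_rpow_mul_exp_le (hm : m ≤ m0) [SigmaFinite (μ.trim hm)]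
    {X V V' : Ω → ℝ} {η' C_L η C_J p : ℝ} (hη' : η' < 1) (hη : 0 ≤ η)
    (hp : 0 ≤ p) (hpκ : p * (η / (1 - η')) < 1)
    (hX : Measurable X) (hX0 : ∀ ω, 0 ≤ X ω) (hV : Measurable[m] V) (hV' : Measurable V')
    (hV'_int : Integrable (fun ω => Real.exp (V' ω)) μ)
    (hV'_rec : μ[fun ω => Real.exp (V' ω)|m] ≤ᵐ[μ] fun ω => Real.exp (η' * V ω + C_L))
    (hX_int : ∀ q : ℝ, 1 ≤ q → Integrable (fun ω => X ω ^ q) μ)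
    (hX_rec : ∀ q : ℝ, 1 ≤ q →
      μ[fun ω => X ω ^ q|m] ≤ᵐ[μ] fun ω => Real.exp (q * η * V ω + q * C_J)) :
    μ⁻[fun ω => ENNReal.ofReal (X ω ^ p * Real.exp (p * (η / (1 - η')) * V' ω))|m] ≤ᵐ[μ]
      fun ω => ENNReal.ofReal (Real.exp (p * (C_J + η / (1 - η') * C_L)) *
        Real.exp (p * (η / (1 - η')) * V ω)) := by
  set κ := η / (1 - η')
  set θ := p * κ
  have hθ0 : 0 ≤ θ := mul_nonneg hp (div_nonneg hη (by linarith))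
  have hκη : κ * (1 - η') = η := div_mul_cancel₀ _ (by linarith)
  set q := p / (1 - θ)
  have hqθ : q * (1 - θ) = p := div_mul_cancel₀ _ (by linarith)
  have h := condLExp_ofReal_rpow_mul_rpow_le hm (Z₁ := fun ω => X ω ^ q)
    (Z₂ := fun ω => Real.exp (V' ω)) (B₁ := fun ω => Real.exp (η * V ω + C_J) ^ q)
    (B₂ := fun ω => Real.exp (η' * V ω + C_L)) (sub_nonneg.mpr hpκ.le) hθ0
    (sub_add_cancel 1 θ) (hX.pow_const q) hV'.exp (fun ω => Real.rpow_nonneg (hX0 ω) q)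
    (fun ω => (Real.exp_pos _).le) (by fun_prop) (by fun_prop)
    (fun ω => Real.rpow_pos_of_pos (Real.exp_pos _) q) (fun ω => Real.exp_pos _)
    (condLExp_ofReal_rpow_le_exp hm hX hX0 hV hX_int hX_rec (q := q)
      (div_nonneg hp (by linarith)))
    (condLExp_ofReal_le_of_condExp_le hV'_int
      (Filter.Eventually.of_forall fun ω => (Real.exp_pos _).le) hV'_rec)
  convert h using 3 with ω ω
  · rw [← Real.rpow_mul (hX0 ω), hqθ, ← Real.exp_mul, mul_comm (V' ω)]
  · rw [← Real.exp_mul, ← Real.exp_mul, ← Real.exp_mul, ← Real.exp_add, ← Real.exp_add]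
    congr 1
    linear_combination p * V ω * hκη - (η * V ω + C_J) * hqθ

theorem lintegral_ofReal_prod_mul_le [IsProbabilityMeasure μ] (ℱ : Filtration ℕ m0)
    {W U : ℕ → Ω → ℝ} (hW : ∀ k, Measurable[ℱ k] (W k)) (hW0 : ∀ k ω, 0 ≤ W k ω)
    (hU : ∀ k, Measurable (U k)) {c u₀ : ℝ} (hc : 0 ≤ c) (hU_init : ∀ᵐ ω ∂μ, U 0 ω = u₀)
    (hstep : ∀ k, μ⁻[fun ω => ENNReal.ofReal (W (k + 1) ω * U (k + 1) ω)|ℱ k] ≤ᵐ[μ]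
      fun ω => ENNReal.ofReal (c * U k ω))
    (n : ℕ) :
    ∫⁻ ω, ENNReal.ofReal ((∏ k ∈ Finset.Icc 1 n, W k ω) * U n ω) ∂μ ≤
      ENNReal.ofReal (u₀ * c ^ n) := by
  induction n with
  | zero =>
    rw [lintegral_congr_ae (g := fun _ => ENNReal.ofReal u₀)
      (hU_init.mono fun ω hω => by simp [hω])]
    simp
  | succ n ih =>
    set G : Ω → ℝ := fun ω => ∏ k ∈ Finset.Icc 1 n, W k ω
    have hG : Measurable[ℱ n] fun ω => ENNReal.ofReal (G ω) :=
      (Finset.measurable_prod _ fun k hk =>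
        (hW k).mono (ℱ.mono (Finset.mem_Icc.mp hk).2) le_rfl).ennreal_ofReal
    have hG0 : ∀ ω, 0 ≤ G ω := fun ω => Finset.prod_nonneg fun k _ => hW0 k ω
    have hWU : Measurable fun ω => ENNReal.ofReal (W (n + 1) ω * U (n + 1) ω) :=
      (((hW _).mono (ℱ.le _) le_rfl).mul (hU _)).ennreal_ofReal
    calc ∫⁻ ω, ENNReal.ofReal ((∏ k ∈ Finset.Icc 1 (n + 1), W k ω) * U (n + 1) ω) ∂μ
        = ∫⁻ ω, ENNReal.ofReal (G ω) * ENNReal.ofReal (W (n + 1) ω * U (n + 1) ω) ∂μ := by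
          refine lintegral_congr fun ω => ?_
          rw [Finset.prod_Icc_succ_top (Nat.le_add_left 1 n), ← ENNReal.ofReal_mul (hG0 ω),
            mul_assoc]
      _ = ∫⁻ ω, ENNReal.ofReal (G ω) *
            μ⁻[fun ω => ENNReal.ofReal (W (n + 1) ω * U (n + 1) ω)|ℱ n] ω ∂μ :=
          (lintegral_mul_condLExp (ℱ.le n) hG hWU).symm
      _ ≤ ∫⁻ ω, ENNReal.ofReal (G ω) * ENNReal.ofReal (c * U n ω) ∂μ :=
          lintegral_mono_ae ((hstep n).mono fun ω hω => by gcongr)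
      _ = ENNReal.ofReal c * ∫⁻ ω, ENNReal.ofReal (G ω * U n ω) ∂μ := by
          rw [← lintegral_const_mul' _ _ ENNReal.ofReal_ne_top]
          refine lintegral_congr fun ω => ?_
          rw [ENNReal.ofReal_mul hc, ENNReal.ofReal_mul (hG0 ω)]
          ring
      _ ≤ ENNReal.ofReal c * ENNReal.ofReal (u₀ * c ^ n) := by gcongr
      _ = ENNReal.ofReal (u₀ * c ^ (n + 1)) := by
          rw [← ENNReal.ofReal_mul hc]
          ring_nf

end

theorem stmt6_general {Ω : Type*} {m0 : MeasurableSpace Ω} (ℙ : Measure Ω) [IsProbabilityMeasure ℙ]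
    (ℱ : Filtration ℕ m0)
    {η' C_L η C_J : ℝ} (hη' : η' ∈ Set.Ico (0:ℝ) 1) (hη : 0 < η)
    (V : ℕ → Ω → ℝ) (hV_nonneg : ∀ k ω, 0 ≤ V k ω)
    (hV_adapted : ∀ k, StronglyMeasurable[ℱ k] (V k))
    {v₀ : ℝ} (hV0 : ∀ᵐ ω ∂ℙ, V 0 ω = v₀)
    (hV_int : ∀ k, Integrable (fun ω => Real.exp (V k ω)) ℙ)
    (hV_rec : ∀ k : ℕ, 1 ≤ k → ∀ᵐ ω ∂ℙ,
      (ℙ[fun ω' => Real.exp (V k ω') | ℱ (k - 1)]) ω ≤ Real.exp (η' * V (k - 1) ω + C_L))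
    (X : ℕ → Ω → ℝ) (hX_nonneg : ∀ k ω, 0 ≤ X k ω)
    (hX_adapted : ∀ k, StronglyMeasurable[ℱ k] (X k))
    (hX_int : ∀ q : ℝ, 1 ≤ q → ∀ k : ℕ, 1 ≤ k → Integrable (fun ω => X k ω ^ q) ℙ)
    (hX_rec : ∀ q : ℝ, 1 ≤ q → ∀ k : ℕ, 1 ≤ k → ∀ᵐ ω ∂ℙ,
      (ℙ[fun ω' => X k ω' ^ q | ℱ (k - 1)]) ω ≤ Real.exp (q * η * V (k - 1) ω + q * C_J)) :
    ∀ p : ℝ, 0 ≤ p → p * (η / (1 - η')) < 1 → ∀ n : ℕ, 1 ≤ n →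
      ∫⁻ ω, ENNReal.ofReal ((∏ k ∈ Finset.Icc 1 n, X k ω) ^ p) ∂ℙ ≤
        ENNReal.ofReal
          (Real.exp (p * (η / (1 - η')) * v₀ + p * (C_J + (η / (1 - η')) * C_L) * n)) := by
  intro p hp hpκ n _
  have hV_meas k : Measurable (V k) := ((hV_adapted k).mono (ℱ.le k)).measurable
  have hX_meas k : Measurable (X k) := ((hX_adapted k).mono (ℱ.le k)).measurable
  have hθ : 0 ≤ p * (η / (1 - η')) := mul_nonneg hp (div_nonneg hη.le (by linarith [hη'.2]))
  have hstep k := condLExp_ofReal_rpow_mul_exp_le (ℱ.le k) hη'.2 hη.le hp hpκ (hX_meas (k + 1))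
    (hX_nonneg (k + 1)) (hV_adapted k).measurable (hV_meas (k + 1)) (hV_int (k + 1))
    (hV_rec (k + 1) k.succ_pos) (fun q hq => hX_int q hq (k + 1) k.succ_pos)
    (fun q hq => hX_rec q hq (k + 1) k.succ_pos)
  have hprod := lintegral_ofReal_prod_mul_le ℱ
    (fun k => (hX_adapted k).measurable.pow_const p) (fun k ω => Real.rpow_nonneg (hX_nonneg k ω) p)
    (fun k => ((hV_meas k).const_mul _).exp) (Real.exp_pos _).le
    (hV0.mono fun ω hω => by rw [hω]) hstep n
  calc ∫⁻ ω, ENNReal.ofReal ((∏ k ∈ Finset.Icc 1 n, X k ω) ^ p) ∂ℙ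
      ≤ ∫⁻ ω, ENNReal.ofReal ((∏ k ∈ Finset.Icc 1 n, X k ω ^ p) *
          Real.exp (p * (η / (1 - η')) * V n ω)) ∂ℙ := by
        refine lintegral_mono fun ω => ENNReal.ofReal_le_ofReal ?_
        rw [Real.finsetProd_rpow _ _ fun k _ => hX_nonneg k ω]
        exact le_mul_of_one_le_right
          (Real.rpow_nonneg (Finset.prod_nonneg fun k _ => hX_nonneg k ω) p)
          (Real.one_le_exp (mul_nonneg hθ (hV_nonneg n ω)))
    _ ≤ _ := hprod
    _ = _ := by
        rw [← Real.exp_nat_mul, ← Real.exp_add]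
        ring_nf

/-- Proposition 6.2 (abstract form): under the Lyapunov recursion
`E[exp(V_k) | ℱ_{k-1}] ≤ exp(η' V_{k-1} + C_L)` and the moment bounds
`E[X_k^q | ℱ_{k-1}] ≤ exp(qη V_{k-1} + q C_J)` for all `q ≥ 1`, one has, for every `p ≥ 0`
with `pκ < 1` (where `κ = η/(1-η')` and `C_T = C_J + κ C_L`),
`E[(∏_{k=1}^n X_k)^p] ≤ exp(pκ v₀ + p C_T n)`. -/
theorem stmt6 {Ω : Type*} {m0 : MeasurableSpace Ω} (ℙ : Measure Ω) [IsProbabilityMeasure ℙ]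
    (ℱ : Filtration ℕ m0)
    {η' C_L η C_J : ℝ} (hη' : η' ∈ Set.Ico (0:ℝ) 1) (hCL : 0 ≤ C_L) (hη : 0 < η)
    (V : ℕ → Ω → ℝ) (hV_nonneg : ∀ k ω, 0 ≤ V k ω)
    (hV_adapted : ∀ k, StronglyMeasurable[ℱ k] (V k))
    {v₀ : ℝ} (hv₀ : 0 ≤ v₀) (hV0 : ∀ᵐ ω ∂ℙ, V 0 ω = v₀)
    (hV_int : ∀ k, Integrable (fun ω => Real.exp (V k ω)) ℙ)
    (hV_rec : ∀ k : ℕ, 1 ≤ k → ∀ᵐ ω ∂ℙ,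
      (ℙ[fun ω' => Real.exp (V k ω') | ℱ (k - 1)]) ω ≤ Real.exp (η' * V (k - 1) ω + C_L))
    (X : ℕ → Ω → ℝ) (hX_nonneg : ∀ k ω, 0 ≤ X k ω)
    (hX_adapted : ∀ k, StronglyMeasurable[ℱ k] (X k))
    (hX_int : ∀ q : ℝ, 1 ≤ q → ∀ k : ℕ, 1 ≤ k → Integrable (fun ω => X k ω ^ q) ℙ)
    (hX_rec : ∀ q : ℝ, 1 ≤ q → ∀ k : ℕ, 1 ≤ k → ∀ᵐ ω ∂ℙ,
      (ℙ[fun ω' => X k ω' ^ q | ℱ (k - 1)]) ω ≤ Real.exp (q * η * V (k - 1) ω + q * C_J)) :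
    ∀ p : ℝ, 0 ≤ p → p * (η / (1 - η')) < 1 → ∀ n : ℕ, 1 ≤ n →
      ∫⁻ ω, ENNReal.ofReal ((∏ k ∈ Finset.Icc 1 n, X k ω) ^ p) ∂ℙ ≤
        ENNReal.ofReal
          (Real.exp (p * (η / (1 - η')) * v₀ + p * (C_J + (η / (1 - η')) * C_L) * n)) :=
  stmt6_general ℙ ℱ hη' hη V hV_nonneg hV_adapted hV0 hV_int hV_rec X hX_nonneg hX_adapted hX_int
    hX_rec
end

section
/- For every α ∈ (0,1] there exists a constant C > 0, depending only on α, with the following property: for every T > 0 and every continuously differentiable function f : [0,T] → ℝ whose derivative f' is α-Hölder continuous, one has sup_{t∈[0,T]} |f'(t)| ≤ C · max{ ‖f‖_∞ / T , ‖f‖_∞^{α/(1+α)} · H_α(f')^{1/(1+α)} }, where ‖f‖_∞ = sup_{t∈[0,T]} |f(t)| and H_α(f') = sup_{s≠t, s,t∈[0,T]} |f'(t) − f'(s)| / |t−s|^α is the best α-Hölder constant of f'. -/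
/-- Lemma 7.2 (homogeneous form): for every `α ∈ (0,1]` there is a constant `C`, depending only
on `α`, such that for every `T > 0` and every continuously differentiable `f : [0,T] → ℝ` with
`α`-Hölder continuous derivative `f'`, one has
`sup |f'| ≤ C max (‖f‖_∞ / T) (‖f‖_∞^{α/(1+α)} H_α(f')^{1/(1+α)})`, where `M` bounds `|f|` and
`H` bounds the `α`-Hölder constant of `f'` on `[0,T]`. -/
theorem stmt7 {α : ℝ} (hα : α ∈ Set.Ioc (0:ℝ) 1) :
    ∃ C : ℝ, 0 < C ∧ ∀ T : ℝ, 0 < T → ∀ f f' : ℝ → ℝ,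
      (∀ t ∈ Set.Icc (0:ℝ) T, HasDerivWithinAt f (f' t) (Set.Icc (0:ℝ) T) t) →
      ∀ M H : ℝ, 0 ≤ M → 0 ≤ H →
      (∀ t ∈ Set.Icc (0:ℝ) T, |f t| ≤ M) →
      (∀ s ∈ Set.Icc (0:ℝ) T, ∀ t ∈ Set.Icc (0:ℝ) T, |f' t - f' s| ≤ H * |t - s| ^ α) →
      ∀ t ∈ Set.Icc (0:ℝ) T,
        |f' t| ≤ C * max (M / T) (M ^ (α / (1 + α)) * H ^ (1 / (1 + α))) := by
  obtain ⟨hα0, hα1⟩ := hα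
  refine ⟨8, by norm_num, ?_⟩
  intro T hT f f' hderiv M H hM hH hfM hHol t ht
  set D := |f' t| with hDdef
  have hD0 : 0 ≤ D := abs_nonneg _
  have hmax0 : 0 ≤ max (M / T) (M ^ (α / (1 + α)) * H ^ (1 / (1 + α))) :=
    le_max_of_le_left (div_nonneg hM hT.le)
  have hMT : M / T * T = M := div_mul_cancel₀ M hT.ne'
  -- Key inequality: for all small h, D * h ≤ 2M + H h^α h
  have key : ∀ h : ℝ, 0 < h → h ≤ T / 2 → D * h ≤ 2 * M + H * h ^ α * h := by
    intro h hh hhT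
    obtain ⟨u, hu, hut⟩ : ∃ u ∈ Set.Icc (0:ℝ) T, |u - t| = h := by
      rcases le_or_gt (t + h) T with h1 | h1
      · exact ⟨t + h, ⟨by linarith [ht.1], h1⟩,
          by rw [add_sub_cancel_left]; exact abs_of_pos hh⟩
      · refine ⟨t - h, ⟨by linarith [ht.2], by linarith [ht.2]⟩, ?_⟩
        rw [show t - h - t = -h by ring, abs_neg, abs_of_pos hh]
    set a := min t u with ha
    set b := max t u with hb
    have hsub : Set.Icc a b ⊆ Set.Icc (0:ℝ) T :=
      Set.Icc_subset_Icc (le_min ht.1 hu.1) (max_le ht.2 hu.2)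
    have hts : t ∈ Set.Icc a b := ⟨min_le_left _ _, le_max_left _ _⟩
    have hus : u ∈ Set.Icc a b := ⟨min_le_right _ _, le_max_right _ _⟩
    have hderiv' : ∀ x ∈ Set.Icc a b,
        HasDerivWithinAt (fun s => f s - f' t * s) (f' x - f' t) (Set.Icc a b) x := by
      intro x hx
      have h1 : HasDerivWithinAt (fun s : ℝ => f' t * s) (f' t) (Set.Icc a b) x := by
        simpa using (hasDerivWithinAt_id x (Set.Icc a b)).const_mul (f' t)
      exact ((hderiv x (hsub hx)).mono hsub).sub h1
    have hbound : ∀ x ∈ Set.Icc a b, ‖f' x - f' t‖ ≤ H * h ^ α := by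
      intro x hx
      have hxT := hsub hx
      have h1 : |f' x - f' t| ≤ H * |x - t| ^ α := hHol t ht x hxT
      have h2 : |x - t| ≤ h := by
        rw [← hut]
        have hba : b - a = |u - t| := by
          rcases le_total t u with hle | hle
          · rw [hb, ha, max_eq_right hle, min_eq_left hle, abs_of_nonneg (by linarith)]
          · rw [hb, ha, max_eq_left hle, min_eq_right hle,
              abs_of_nonpos (by linarith)]; ring
        rw [abs_sub_le_iff]
        constructor <;> [skip; skip] <;>
          · have h3 := hx.1; have h4 := hx.2; have h5 := hts.1; have h6 := hts.2
            have := hba; nlinarith [abs_nonneg (u - t)]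
      calc ‖f' x - f' t‖ = |f' x - f' t| := rfl
        _ ≤ H * |x - t| ^ α := h1
        _ ≤ H * h ^ α :=
            mul_le_mul_of_nonneg_left (Real.rpow_le_rpow (abs_nonneg _) h2 hα0.le) hH
    have hest := (convex_Icc a b).norm_image_sub_le_of_norm_hasDerivWithin_le
      hderiv' hbound hts hus
    rw [Real.norm_eq_abs, Real.norm_eq_abs, hut] at hest
    have h2M : |f u - f t| ≤ 2 * M := by
      have h1 := abs_le.mp (hfM u hu)
      have h2 := abs_le.mp (hfM t ht)
      rw [abs_le]; constructor <;> linarith [h1.1, h1.2, h2.1, h2.2]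
    have hsplit : D * h ≤ |(f u - f' t * u) - (f t - f' t * t)| + |f u - f t| := by
      have h1 : f' t * (u - t) = ((f u - f' t * u) - (f t - f' t * t) - (f u - f t)) * (-1) := by
        ring
      calc D * h = |f' t * (u - t)| := by rw [abs_mul, hut]
        _ = |(f u - f' t * u) - (f t - f' t * t) - (f u - f t)| := by
            rw [h1, abs_mul]; simp
        _ ≤ |(f u - f' t * u) - (f t - f' t * t)| + |f u - f t| := abs_sub _ _
    linarith
  -- Now conclude.
  rcases eq_or_lt_of_le hD0 with hDz | hDpos
  · rw [← hDz]
    exact mul_nonneg (by norm_num) hmax0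
  rcases eq_or_lt_of_le hH with hHz | hHpos
  · -- H = 0
    have k := key (T / 2) (by linarith) le_rfl
    rw [← hHz] at k
    have hDle : D ≤ 8 * (M / T) := by nlinarith
    calc D ≤ 8 * (M / T) := hDle
      _ ≤ 8 * max (M / T) (M ^ (α / (1 + α)) * H ^ (1 / (1 + α))) :=
          mul_le_mul_of_nonneg_left (le_max_left _ _) (by norm_num)
  · set h0 := (D / (2 * H)) ^ (1 / α) with hh0def
    have h2H : (0:ℝ) < 2 * H := by linarith
    have hh0 : 0 < h0 := Real.rpow_pos_of_pos (div_pos hDpos h2H) _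
    have hh0α : h0 ^ α = D / (2 * H) := by
      rw [hh0def, ← Real.rpow_mul (div_pos hDpos h2H).le, one_div,
        inv_mul_cancel₀ hα0.ne', Real.rpow_one]
    rcases le_or_gt h0 (T / 2) with hcase | hcase
    · -- use h = h0
      have k := key h0 hh0 hcase
      have hHh0 : H * h0 ^ α = D / 2 := by
        rw [hh0α]; field_simp
      rw [hHh0] at k
      have k2 : D * h0 ≤ 4 * M := by nlinarith
      -- rewrite D * h0
      have hsplitpow : h0 = D ^ (1 / α) / (2 * H) ^ (1 / α) := by
        rw [hh0def, Real.div_rpow hD0 h2H.le]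
      have hDh0 : D * h0 * (2 * H) ^ (1 / α) = D ^ ((1 + α) / α) := by
        rw [hsplitpow]
        have h2Hpow : (0:ℝ) < (2 * H) ^ (1 / α) := Real.rpow_pos_of_pos h2H _
        rw [mul_assoc, div_mul_cancel₀ _ h2Hpow.ne']
        rw [show D * D ^ (1 / α) = D ^ (1:ℝ) * D ^ (1 / α) by rw [Real.rpow_one],
          ← Real.rpow_add hDpos]
        congr 1
        field_simp
        ring
      have hpow : D ^ ((1 + α) / α) ≤ 4 * M * (2 * H) ^ (1 / α) := by
        rw [← hDh0]
        exact mul_le_mul_of_nonneg_right k2 (Real.rpow_pos_of_pos h2H _).le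
      have h1α : (0:ℝ) < 1 + α := by linarith
      have hfin : D ≤ (4 * M) ^ (α / (1 + α)) * (2 * H) ^ (1 / (1 + α)) := by
        have hmono := Real.rpow_le_rpow (Real.rpow_nonneg hD0 _) hpow
          (by positivity : (0:ℝ) ≤ α / (1 + α))
        rw [← Real.rpow_mul hD0] at hmono
        rw [show (1 + α) / α * (α / (1 + α)) = 1 by field_simp, Real.rpow_one] at hmono
        rw [Real.mul_rpow (by linarith) (Real.rpow_pos_of_pos h2H _).le,
          ← Real.rpow_mul h2H.le] at hmono
        rw [show 1 / α * (α / (1 + α)) = 1 / (1 + α) by field_simp] at hmono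
        exact hmono
      have hcoef : (4 * M) ^ (α / (1 + α)) * (2 * H) ^ (1 / (1 + α)) ≤
          8 * (M ^ (α / (1 + α)) * H ^ (1 / (1 + α))) := by
        rw [Real.mul_rpow (by norm_num) hM, Real.mul_rpow (by norm_num) hH]
        have h4 : (4:ℝ) ^ (α / (1 + α)) ≤ 4 := by
          have := Real.rpow_le_rpow_of_exponent_le (show (1:ℝ) ≤ 4 by norm_num)
            (show α / (1 + α) ≤ 1 by rw [div_le_one h1α]; linarith)
          simpa using this
        have h2 : (2:ℝ) ^ (1 / (1 + α)) ≤ 2 := by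
          have := Real.rpow_le_rpow_of_exponent_le (show (1:ℝ) ≤ 2 by norm_num)
            (show 1 / (1 + α) ≤ 1 by rw [div_le_one h1α]; linarith)
          simpa using this
        have hMp : (0:ℝ) ≤ M ^ (α / (1 + α)) := Real.rpow_nonneg hM _
        have hHp : (0:ℝ) ≤ H ^ (1 / (1 + α)) := Real.rpow_nonneg hH _
        have h4p : (0:ℝ) ≤ (4:ℝ) ^ (α / (1 + α)) := Real.rpow_nonneg (by norm_num) _
        have h2p : (0:ℝ) ≤ (2:ℝ) ^ (1 / (1 + α)) := Real.rpow_nonneg (by norm_num) _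
        have h8 : (4:ℝ) ^ (α / (1 + α)) * (2:ℝ) ^ (1 / (1 + α)) ≤ 8 := by
          nlinarith [mul_le_mul h4 h2 h2p (show (0:ℝ) ≤ 4 by norm_num)]
        calc (4:ℝ) ^ (α / (1 + α)) * M ^ (α / (1 + α)) *
              ((2:ℝ) ^ (1 / (1 + α)) * H ^ (1 / (1 + α)))
            = ((4:ℝ) ^ (α / (1 + α)) * (2:ℝ) ^ (1 / (1 + α))) *
              (M ^ (α / (1 + α)) * H ^ (1 / (1 + α))) := by ring
          _ ≤ 8 * (M ^ (α / (1 + α)) * H ^ (1 / (1 + α))) :=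
              mul_le_mul_of_nonneg_right h8 (mul_nonneg hMp hHp)
      calc D ≤ 8 * (M ^ (α / (1 + α)) * H ^ (1 / (1 + α))) := le_trans hfin hcoef
        _ ≤ 8 * max (M / T) (M ^ (α / (1 + α)) * H ^ (1 / (1 + α))) :=
            mul_le_mul_of_nonneg_left (le_max_right _ _) (by norm_num)
    · -- use h = T/2
      have k := key (T / 2) (by linarith) le_rfl
      have hlt : H * (T / 2) ^ α ≤ D / 2 := by
        have hmono : (T / 2) ^ α ≤ h0 ^ α :=
          Real.rpow_le_rpow (by linarith) hcase.le hα0.le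
        rw [hh0α] at hmono
        calc H * (T / 2) ^ α ≤ H * (D / (2 * H)) :=
              mul_le_mul_of_nonneg_left hmono hH
          _ = D / 2 := by field_simp
      have hT2 : (0:ℝ) < T / 2 := by linarith
      have hHpos2 : 0 ≤ H * (T / 2) ^ α :=
        mul_nonneg hH (Real.rpow_nonneg hT2.le _)
      have hDle : D ≤ 8 * (M / T) := by nlinarith
      calc D ≤ 8 * (M / T) := hDle
        _ ≤ 8 * max (M / T) (M ^ (α / (1 + α)) * H ^ (1 / (1 + α))) :=
            mul_le_mul_of_nonneg_left (le_max_left _ _) (by norm_num)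
end

section
/- Let ℓ ≥ 1, let n ≥ 3 be an odd integer, and for each k = 0, 1, …, n let F_k : (ℝ^ℓ)^k → ℝ^ℓ be a symmetric k-linear map (with F₀ a constant vector). Define the polynomial map f : ℝ^ℓ → ℝ^ℓ by f(u) = Σ_{k=0}^n F_k(u, …, u). Assume that ⟨F_n(u, …, u, v), v⟩ < 0 for all u, v ∈ ℝ^ℓ ∖ {0}, where ⟨·,·⟩ is the Euclidean inner product. Then there exist constants c > 0 and C > 0 such that ⟨f(u+v), u⟩ ≤ C(1 + ‖v‖^{n+1}) − c ‖u‖^{n+1} for every u, v ∈ ℝ^ℓ. -/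
open scoped RealInnerProductSpace
open Filter Asymptotics

/-!
Write `w = u + v`. The form `w ↦ ⟪F_n(w,…,w), w⟫` is continuous, homogeneous of degree `n + 1`
and negative off `0`, so its maximum on the unit sphere gives `⟪F_n(w,…,w), w⟫ ≤ -c‖w‖^(n+1)`.
The lower-order terms are `o(‖w‖^(n+1))`, hence `⟪f w, w⟫ ≤ A - (c/2)‖w‖^(n+1)`, while
`‖f w‖ ≤ B‖w‖^n + B'`. In `⟪f w, u⟫ = ⟪f w, w⟫ - ⟪f w, v⟫` Young's inequality absorbs
`‖w‖^n‖v‖` into `‖w‖^(n+1)` and `‖v‖^(n+1)`, and `‖u‖^(n+1) ≤ 2^n (‖w‖^(n+1) + ‖v‖^(n+1))`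
turns the remaining dissipation in `w` into one in `u`.
-/

theorem MultilinearMap.continuous_of_finiteDimensional {𝕜 ι G : Type*} {E : ι → Type*}
    [NontriviallyNormedField 𝕜] [CompleteSpace 𝕜] [Fintype ι]
    [∀ i, NormedAddCommGroup (E i)] [∀ i, NormedSpace 𝕜 (E i)] [∀ i, FiniteDimensional 𝕜 (E i)]
    [AddCommGroup G] [Module 𝕜 G] [TopologicalSpace G] [IsTopologicalAddGroup G]
    [ContinuousSMul 𝕜 G] (f : MultilinearMap 𝕜 E G) : Continuous f := by
  classical
  let b := fun i => Module.finBasis 𝕜 (E i)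
  have hf : ⇑f = fun m => ∑ r : ∀ i, Fin (Module.finrank 𝕜 (E i)),
      (∏ i, (b i).equivFunL (m i) (r i)) • f fun i => b i (r i) := by
    funext m
    conv_lhs => rw [← funext fun i => (b i).sum_equivFun (m i)]
    simp only [f.map_sum, f.map_smul_univ, Module.Basis.equivFunL_apply,
      Module.Basis.equivFun_apply]
  rw [hf]
  fun_prop

theorem MultilinearMap.exists_norm_map_const_le {𝕜 ι E G : Type*} [NontriviallyNormedField 𝕜]
    [CompleteSpace 𝕜] [Fintype ι] [NormedAddCommGroup E] [NormedSpace 𝕜 E]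
    [FiniteDimensional 𝕜 E] [SeminormedAddCommGroup G] [NormedSpace 𝕜 G]
    (f : MultilinearMap 𝕜 (fun _ : ι => E) G) :
    ∃ M, 0 < M ∧ ∀ w, ‖f (fun _ => w)‖ ≤ M * ‖w‖ ^ Fintype.card ι := by
  obtain ⟨M, hM, hf⟩ := f.exists_bound_of_continuous f.continuous_of_finiteDimensional
  exact ⟨M, hM, fun w => by simpa using hf fun _ => w⟩

theorem MultilinearMap.map_const_smul {R ι M N : Type*} [CommSemiring R] [Fintype ι]
    [AddCommMonoid M] [AddCommMonoid N] [Module R M] [Module R N]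
    (f : MultilinearMap R (fun _ : ι => M) N) (s : R) (w : M) :
    f (fun _ => s • w) = s ^ Fintype.card ι • f (fun _ => w) := by
  simpa using f.map_smul_univ (fun _ => s) (fun _ => w)

theorem exists_sum_mul_pow_le (M : ℕ → ℝ) (n j : ℕ) {δ : ℝ} (hδ : 0 < δ) :
    ∃ C, 0 ≤ C ∧ ∀ t, 0 ≤ t → ∑ k ∈ Finset.range n, M k * t ^ (k + j) ≤ δ * t ^ (n + j) + C := by
  have ho : (fun t : ℝ => ∑ k ∈ Finset.range n, M k * t ^ (k + j)) =o[atTop]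
      fun t => t ^ (n + j) :=
    IsLittleO.fun_sum fun k hk =>
      (isLittleO_pow_pow_atTop_of_lt (by rw [Finset.mem_range] at hk; omega)).const_mul_left (M k)
  obtain ⟨N, hN⟩ := eventually_atTop.1 (ho.bound hδ)
  obtain ⟨C, hC⟩ := (isCompact_Icc (a := 0) (b := N)).bddAbove_image (f := fun t : ℝ =>
    ∑ k ∈ Finset.range n, M k * t ^ (k + j)) (by fun_prop)
  refine ⟨max C 0, le_max_right _ _, fun t ht => ?_⟩
  have hpow : 0 ≤ δ * t ^ (n + j) := by positivity
  rcases le_total t N with htN | hNt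
  · have := hC ⟨t, ⟨ht, htN⟩, rfl⟩
    linarith [le_max_left C 0]
  · have := hN t hNt
    rw [Real.norm_eq_abs, Real.norm_of_nonneg (by positivity)] at this
    linarith [le_abs_self (∑ k ∈ Finset.range n, M k * t ^ (k + j)), le_max_right C 0]

theorem pow_mul_le_mul_pow_succ_add (p : ℕ) {δ x y : ℝ} (hδ : 0 < δ) (hx : 0 ≤ x) (hy : 0 ≤ y) :
    x ^ p * y ≤ δ * x ^ (p + 1) + δ⁻¹ ^ p * y ^ (p + 1) := by
  rcases le_total y (δ * x) with h | h
  · calc x ^ p * y ≤ x ^ p * (δ * x) := by gcongr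
      _ = δ * x ^ (p + 1) := by ring
      _ ≤ _ := by linarith [show 0 ≤ δ⁻¹ ^ p * y ^ (p + 1) by positivity]
  · have hxy : x ≤ δ⁻¹ * y := by rwa [le_inv_mul_iff₀ hδ]
    calc x ^ p * y ≤ (δ⁻¹ * y) ^ p * y := by gcongr
      _ = δ⁻¹ ^ p * y ^ (p + 1) := by ring
      _ ≤ _ := by linarith [show 0 ≤ δ * x ^ (p + 1) by positivity]

theorem exists_le_neg_mul_norm_pow_of_homogeneous {E : Type*} [NormedAddCommGroup E]
    [NormedSpace ℝ E] [FiniteDimensional ℝ E] {φ : E → ℝ} {p : ℕ} (hφ : Continuous φ)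
    (hhom : ∀ s : ℝ, 0 ≤ s → ∀ w, φ (s • w) = s ^ p * φ w) (hp : p ≠ 0)
    (hneg : ∀ w, w ≠ 0 → φ w < 0) :
    ∃ c, 0 < c ∧ ∀ w, φ w ≤ -c * ‖w‖ ^ p := by
  have hzero : ∀ c, φ 0 ≤ -c * ‖(0 : E)‖ ^ p := fun c => by
    simpa [zero_pow hp] using (hhom 0 le_rfl 0).le
  rcases subsingleton_or_nontrivial E with hE | hE
  · exact ⟨1, one_pos, fun w => Subsingleton.elim w 0 ▸ hzero 1⟩
  obtain ⟨w₀, hw₀, hmax⟩ := (isCompact_sphere (0 : E) 1).exists_isMaxOn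
    (NormedSpace.sphere_nonempty.2 zero_le_one) hφ.continuousOn
  have hw₀ : w₀ ≠ 0 := ne_zero_of_mem_unit_sphere ⟨w₀, hw₀⟩
  refine ⟨-φ w₀, neg_pos.2 (hneg w₀ hw₀), fun w => ?_⟩
  rcases eq_or_ne w 0 with rfl | hw
  · exact hzero _
  have hunit : ‖w‖⁻¹ • w ∈ Metric.sphere (0 : E) 1 := by
    simp [norm_smul, hw]
  calc φ w = ‖w‖ ^ p * φ (‖w‖⁻¹ • w) := by
        rw [← hhom _ (norm_nonneg w), smul_inv_smul₀ (norm_ne_zero_iff.2 hw)]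
    _ ≤ ‖w‖ ^ p * φ w₀ := by gcongr; exact hmax hunit
    _ = -(-φ w₀) * ‖w‖ ^ p := by ring

theorem exists_inner_add_le_of_dissipative {E : Type*} [NormedAddCommGroup E]
    [InnerProductSpace ℝ E] {g : E → E} {p : ℕ} {a A B B' : ℝ} (ha : 0 < a) (hB : 0 < B)
    (hB' : 0 ≤ B') (hdiss : ∀ w, ⟪g w, w⟫ ≤ A - a * ‖w‖ ^ (p + 1))
    (hgrowth : ∀ w, ‖g w‖ ≤ B * ‖w‖ ^ p + B') :
    ∃ c C : ℝ, 0 < c ∧ 0 < C ∧ ∀ u v,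
      ⟪g (u + v), u⟫ ≤ C * (1 + ‖v‖ ^ (p + 1)) - c * ‖u‖ ^ (p + 1) := by
  set δ := a / (2 * B)
  have hδ : 0 < δ := by positivity
  set K := B * δ⁻¹ ^ p
  refine ⟨a / 2 ^ (p + 1), |A| + B' + K + a / 2 + 1, by positivity, by positivity, fun u v => ?_⟩
  set w := u + v
  have hx := norm_nonneg w
  have hy := norm_nonneg v
  have hsplit : ⟪g w, u⟫ = ⟪g w, w⟫ - ⟪g w, v⟫ := by
    rw [← inner_sub_right, add_sub_cancel_right]
  have hcross : -⟪g w, v⟫ ≤ a / 2 * ‖w‖ ^ (p + 1) + K * ‖v‖ ^ (p + 1) + B' * ‖v‖ := by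
    calc -⟪g w, v⟫ ≤ ‖g w‖ * ‖v‖ := by
          linarith [neg_le_abs ⟪g w, v⟫, abs_real_inner_le_norm (g w) v]
      _ ≤ (B * ‖w‖ ^ p + B') * ‖v‖ := by gcongr; exact hgrowth w
      _ = B * (‖w‖ ^ p * ‖v‖) + B' * ‖v‖ := by ring
      _ ≤ B * (δ * ‖w‖ ^ (p + 1) + δ⁻¹ ^ p * ‖v‖ ^ (p + 1)) + B' * ‖v‖ := by
          gcongr; exact pow_mul_le_mul_pow_succ_add p hδ hx hy
      _ = _ := by simp only [δ, K]; field_simp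
  have hv : ‖v‖ ≤ 1 + ‖v‖ ^ (p + 1) := by
    rcases le_total ‖v‖ 1 with h | h
    · linarith [pow_nonneg hy (p + 1)]
    · linarith [le_self_pow₀ h (n := p + 1) (by omega)]
  have hu : ‖u‖ ^ (p + 1) ≤ 2 ^ p * (‖w‖ ^ (p + 1) + ‖v‖ ^ (p + 1)) := by
    calc ‖u‖ ^ (p + 1) ≤ (‖w‖ + ‖v‖) ^ (p + 1) := by
          gcongr; simpa [w] using norm_sub_le w v
      _ ≤ _ := by simpa using add_pow_le hx hy (p + 1)
  have hcu : a / 2 ^ (p + 1) * ‖u‖ ^ (p + 1) ≤ a / 2 * (‖w‖ ^ (p + 1) + ‖v‖ ^ (p + 1)) := by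
    calc a / 2 ^ (p + 1) * ‖u‖ ^ (p + 1)
        ≤ a / 2 ^ (p + 1) * (2 ^ p * (‖w‖ ^ (p + 1) + ‖v‖ ^ (p + 1))) := by gcongr
      _ = _ := by rw [pow_succ]; field_simp
  have hK : 0 ≤ K := by positivity
  have hC : (K + B' + a / 2) * ‖v‖ ^ (p + 1) ≤ (|A| + B' + K + a / 2 + 1) * ‖v‖ ^ (p + 1) :=
    mul_le_mul_of_nonneg_right (by linarith [abs_nonneg A]) (by positivity)
  linarith [hdiss w, le_abs_self A, mul_le_mul_of_nonneg_left hv hB']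

section PolynomialMap

variable {E : Type*} [NormedAddCommGroup E] [InnerProductSpace ℝ E] [FiniteDimensional ℝ E]
  (F : ∀ k : ℕ, MultilinearMap ℝ (fun _ : Fin k => E) E)

theorem exists_inner_sum_map_const_self_le {n : ℕ} {c : ℝ} (hc : 0 < c)
    (hlead : ∀ w, ⟪F n (fun _ => w), w⟫ ≤ -c * ‖w‖ ^ (n + 1)) :
    ∃ A, ∀ w, ⟪∑ k ∈ Finset.range (n + 1), F k (fun _ => w), w⟫ ≤ A - c / 2 * ‖w‖ ^ (n + 1) := by
  choose M _ hM using fun k => (F k).exists_norm_map_const_le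
  obtain ⟨A, -, hA⟩ := exists_sum_mul_pow_le M n 1 (half_pos hc)
  refine ⟨A, fun w => ?_⟩
  have hlow : ∑ k ∈ Finset.range n, ⟪F k (fun _ => w), w⟫ ≤
      ∑ k ∈ Finset.range n, M k * ‖w‖ ^ (k + 1) := by
    refine Finset.sum_le_sum fun k _ => ?_
    calc ⟪F k (fun _ => w), w⟫ ≤ ‖F k (fun _ => w)‖ * ‖w‖ := real_inner_le_norm _ _
      _ ≤ M k * ‖w‖ ^ k * ‖w‖ := by gcongr; simpa using hM k w
      _ = M k * ‖w‖ ^ (k + 1) := by ring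
  rw [sum_inner, Finset.sum_range_succ]
  linarith [hA ‖w‖ (norm_nonneg w), hlead w]

theorem exists_norm_sum_map_const_le (n : ℕ) :
    ∃ B B', 0 < B ∧ 0 ≤ B' ∧
      ∀ w, ‖∑ k ∈ Finset.range (n + 1), F k (fun _ => w)‖ ≤ B * ‖w‖ ^ n + B' := by
  choose M hM₀ hM using fun k => (F k).exists_norm_map_const_le
  obtain ⟨B', hB', hlow⟩ := exists_sum_mul_pow_le M n 0 one_pos
  simp only [add_zero, one_mul] at hlow
  refine ⟨M n + 1, B', by linarith [hM₀ n], hB', fun w => ?_⟩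
  calc ‖∑ k ∈ Finset.range (n + 1), F k (fun _ => w)‖
      ≤ ∑ k ∈ Finset.range (n + 1), M k * ‖w‖ ^ k :=
        (norm_sum_le _ _).trans (Finset.sum_le_sum fun k _ => by simpa using hM k w)
    _ = ∑ k ∈ Finset.range n, M k * ‖w‖ ^ k + M n * ‖w‖ ^ n := Finset.sum_range_succ _ _
    _ ≤ (M n + 1) * ‖w‖ ^ n + B' := by linarith [hlow ‖w‖ (norm_nonneg w)]

end PolynomialMap

theorem stmt12_general {ℓ n : ℕ}
    (F : ∀ k : ℕ,
      MultilinearMap ℝ (fun _ : Fin k => EuclideanSpace ℝ (Fin ℓ)) (EuclideanSpace ℝ (Fin ℓ)))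
    (hneg : ∀ u v : EuclideanSpace ℝ (Fin ℓ), u ≠ 0 → v ≠ 0 →
      ⟪F n (fun i => if (i : ℕ) < n - 1 then u else v), v⟫ < 0) :
    ∃ c C : ℝ, 0 < c ∧ 0 < C ∧ ∀ u v : EuclideanSpace ℝ (Fin ℓ),
      ⟪∑ k ∈ Finset.range (n + 1), F k (fun _ => u + v), u⟫ ≤
        C * (1 + ‖v‖ ^ (n + 1)) - c * ‖u‖ ^ (n + 1) := by
  have hcont : Continuous fun w => ⟪F n (fun _ => w), w⟫ := by
    have := (F n).continuous_of_finiteDimensional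
    fun_prop
  have hhom : ∀ s : ℝ, 0 ≤ s → ∀ w,
      ⟪F n (fun _ => s • w), s • w⟫ = s ^ (n + 1) * ⟪F n (fun _ => w), w⟫ := fun s _ w => by
    rw [MultilinearMap.map_const_smul, real_inner_smul_left, real_inner_smul_right,
      Fintype.card_fin]
    ring
  obtain ⟨c, hc, hlead⟩ := exists_le_neg_mul_norm_pow_of_homogeneous hcont hhom n.succ_ne_zero
    fun w hw => by simpa using hneg w w hw hw
  obtain ⟨A, hdiss⟩ := exists_inner_sum_map_const_self_le F hc hlead
  obtain ⟨B, B', hB, hB', hgrowth⟩ := exists_norm_sum_map_const_le F n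
  exact exists_inner_add_le_of_dissipative (half_pos hc) hB hB' hdiss hgrowth

/-- The inequality (e:boundf): if `f(u) = Σ_{k=0}^n F_k(u,…,u)` is an odd-degree polynomial
map on `ℝ^ℓ` whose leading symmetric `n`-linear part satisfies `⟨F_n(u,…,u,v), v⟩ < 0` for all
nonzero `u, v`, then there are `c, C > 0` with
`⟨f(u+v), u⟩ ≤ C(1 + ‖v‖^{n+1}) − c‖u‖^{n+1}` for all `u, v`. -/
theorem stmt12 {ℓ n : ℕ} (hℓ : 1 ≤ ℓ) (hn : 3 ≤ n) (hodd : Odd n)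
    (F : ∀ k : ℕ,
      MultilinearMap ℝ (fun _ : Fin k => EuclideanSpace ℝ (Fin ℓ)) (EuclideanSpace ℝ (Fin ℓ)))
    (hsymm : ∀ (k : ℕ) (σ : Equiv.Perm (Fin k)) (x : Fin k → EuclideanSpace ℝ (Fin ℓ)),
      F k (x ∘ σ) = F k x)
    (hneg : ∀ u v : EuclideanSpace ℝ (Fin ℓ), u ≠ 0 → v ≠ 0 →
      ⟪F n (fun i => if (i : ℕ) < n - 1 then u else v), v⟫ < 0) :
    ∃ c C : ℝ, 0 < c ∧ 0 < C ∧ ∀ u v : EuclideanSpace ℝ (Fin ℓ),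
      ⟪∑ k ∈ Finset.range (n + 1), F k (fun _ => u + v), u⟫ ≤
        C * (1 + ‖v‖ ^ (n + 1)) - c * ‖u‖ ^ (n + 1) :=
  stmt12_general F hneg
end

section
/- Let ν > 0, η > 0, γ > 0 and L > 0, and let g : ℝ → ℝ be a bounded continuous L-periodic function. Then there exists a constant C > 0, depending only on η and sup_x |g(x)|, such that for every ε ∈ (0,1], every twice continuously differentiable L-periodic function v : ℝ → ℝ satisfying ν v''(x) + η v(x) − v(x)³ + ε^{-γ} g(x) = 0 for all x ∈ ℝ obeys sup_x |v(x)| ≤ C ε^{-γ/3}. -/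
/-!
At a global maximum `x₀` of the periodic solution, `v'' ≤ 0`, so the equation gives
`v(x₀)³ ≤ η v(x₀) + ε^{-γ} sup |g|`; symmetrically at a global minimum for `-v`. With
`a = ε^{-γ/3} ≥ 1` this reads `M³ ≤ η M + G a³`, which forces `M ≤ (η + G + 1) a`.
-/

open Filter Topology

/-- If `deriv (deriv f) x₀` were positive, the second-derivative test would make `x₀` also a
local minimum, so `f` would be locally constant near `x₀`. -/
theorem IsLocalMax.deriv_deriv_nonpos {f : ℝ → ℝ} {x₀ : ℝ} (hc : ContinuousAt f x₀)
    (h : IsLocalMax f x₀) : deriv (deriv f) x₀ ≤ 0 := by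
  by_contra! hpos
  have hmin : IsLocalMin f x₀ := isLocalMin_of_deriv_deriv_pos hpos h.deriv_eq_zero hc
  have hconst : f =ᶠ[𝓝 x₀] fun _ => f x₀ :=
    (h.and hmin).mono fun y hy => le_antisymm hy.1 hy.2
  have hderiv : deriv f =ᶠ[𝓝 x₀] fun _ => 0 :=
    hconst.deriv.trans (Eventually.of_forall fun y => deriv_const y (f x₀))
  exact hpos.ne' (hderiv.deriv_eq.trans (deriv_const x₀ 0))

theorem IsLocalMin.deriv_deriv_nonneg {f : ℝ → ℝ} {x₀ : ℝ} (hc : ContinuousAt f x₀)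
    (h : IsLocalMin f x₀) : 0 ≤ deriv (deriv f) x₀ := by
  simpa [deriv.neg'] using h.neg.deriv_deriv_nonpos hc.neg

theorem Function.Periodic.exists_forall_le_of_continuous {f : ℝ → ℝ} {c : ℝ}
    (hp : Function.Periodic f c) (hc : c ≠ 0) (hf : Continuous f) : ∃ x₀, ∀ y, f y ≤ f x₀ := by
  obtain ⟨_, ⟨x₀, rfl⟩, hx₀⟩ :=
    (hp.compact_of_continuous hc hf).exists_isGreatest (Set.range_nonempty f)
  exact ⟨x₀, fun y => hx₀ ⟨y, rfl⟩⟩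

theorem Function.Periodic.exists_forall_ge_of_continuous {f : ℝ → ℝ} {c : ℝ}
    (hp : Function.Periodic f c) (hc : c ≠ 0) (hf : Continuous f) : ∃ x₀, ∀ y, f x₀ ≤ f y := by
  obtain ⟨_, ⟨x₀, rfl⟩, hx₀⟩ :=
    (hp.compact_of_continuous hc hf).exists_isLeast (Set.range_nonempty f)
  exact ⟨x₀, fun y => hx₀ ⟨y, rfl⟩⟩

/-- If `M > (η + G + 1) a` then `M ≥ 1` and `M ≥ a`, so `M³ > (η + G + 1) a M²` dominates both
`η M` and `G a³`. -/
theorem le_mul_of_pow_three_le {M a η G : ℝ} (hη : 0 ≤ η) (hG : 0 ≤ G) (ha : 1 ≤ a)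
    (h : M ^ 3 ≤ η * M + G * a ^ 3) : M ≤ (η + G + 1) * a := by
  by_contra! hlt
  have haM : a ≤ M := by nlinarith
  have hM : 1 ≤ M := ha.trans haM
  have hηM : η * M ≤ η * a * M ^ 2 :=
    calc η * M = η * 1 * M * 1 := by ring
      _ ≤ η * a * M * M := by gcongr
      _ = η * a * M ^ 2 := by ring
  have hGa : G * a ^ 3 ≤ G * a * M ^ 2 :=
    calc G * a ^ 3 = G * a * a ^ 2 := by ring
      _ ≤ G * a * M ^ 2 := by gcongr
  nlinarith [mul_lt_mul_of_pos_right hlt (by positivity : (0 : ℝ) < M ^ 2)]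

/-- Lemma 9.9: any `L`-periodic `C²` solution `v` of the stationary Ginzburg–Landau equation
`ν v'' + η v − v³ + ε^{-γ} g = 0` with bounded continuous periodic forcing `g` satisfies
`sup |v| ≤ C ε^{-γ/3}`, where `C` depends only on `η` and on a bound `G` for `sup |g|`. -/
theorem stmt14 {η G : ℝ} (hη : 0 < η) (hG : 0 ≤ G) :
    ∃ C : ℝ, 0 < C ∧ ∀ ν L γ : ℝ, 0 < ν → 0 < L → 0 < γ →
      ∀ g : ℝ → ℝ, Continuous g → Function.Periodic g L → (∀ x, |g x| ≤ G) →
      ∀ ε ∈ Set.Ioc (0:ℝ) 1, ∀ v : ℝ → ℝ, ContDiff ℝ 2 v → Function.Periodic v L →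
        (∀ x, ν * iteratedDeriv 2 v x + η * v x - (v x) ^ 3 + ε ^ (-γ) * g x = 0) →
        ∀ x, |v x| ≤ C * ε ^ (-γ / 3) := by
  refine ⟨η + G + 1, by positivity, ?_⟩
  intro ν L γ hν hL hγ g _ _ hg ε ⟨hε0, hε1⟩ v hv hvL hsol x
  have ha : 1 ≤ ε ^ (-γ / 3) :=
    Real.one_le_rpow_of_pos_of_le_one_of_nonpos hε0 hε1 (by linarith)
  have hcube : ε ^ (-γ) = (ε ^ (-γ / 3)) ^ 3 := by
    rw [← Real.rpow_natCast, ← Real.rpow_mul hε0.le]; norm_num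
  have hv2 : iteratedDeriv 2 v = deriv (deriv v) := by
    rw [iteratedDeriv_succ, iteratedDeriv_one]
  rw [hv2] at hsol
  have hforce : ∀ y, |ε ^ (-γ) * g y| ≤ G * (ε ^ (-γ / 3)) ^ 3 := by
    intro y
    rw [abs_mul, abs_of_pos (Real.rpow_pos_of_pos hε0 _), hcube, mul_comm]
    gcongr
    exact hg y
  obtain ⟨x₀, hx₀⟩ := hvL.exists_forall_le_of_continuous hL.ne' hv.continuous
  obtain ⟨x₁, hx₁⟩ := hvL.exists_forall_ge_of_continuous hL.ne' hv.continuous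
  have hmax : v x₀ ≤ (η + G + 1) * ε ^ (-γ / 3) := by
    have hv'' := IsLocalMax.deriv_deriv_nonpos hv.continuous.continuousAt
      (Eventually.of_forall hx₀)
    refine le_mul_of_pow_three_le hη.le hG ha ?_
    linarith [hsol x₀, abs_le.mp (hforce x₀), mul_nonpos_of_nonneg_of_nonpos hν.le hv'']
  have hmin : -v x₁ ≤ (η + G + 1) * ε ^ (-γ / 3) := by
    have hv'' := IsLocalMin.deriv_deriv_nonneg hv.continuous.continuousAt
      (Eventually.of_forall hx₁)
    refine le_mul_of_pow_three_le hη.le hG ha ?_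
    linarith [hsol x₁, abs_le.mp (hforce x₁), mul_nonneg hν.le hv'']
  rw [abs_le]
  constructor <;> linarith [hx₀ x, hx₁ x]
end
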